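/- arXiv:1305.6083 — 10 statements merged into one kernel-verified Lean document; each statement's English description precedes it below -/
import Mathlib

section
/- Fix integers a and b with 1 ≤ b ≤ a/2. The number of binary sequences of length a containing at most b ones, such that no initial segment contains more ones than zeros, equals the binomial coefficient C(a, b). -/
/-- `μ` is a partition with distinct parts (strictly decreasing positive parts,
followed by a tail of zeros), encoded as a function `Fin b → ℕ`. -/
def DistinctParts {b : ℕ} (μ : Fin b → ℕ) : Prop :=
  ∀ i j : Fin b, i < j → μ j = 0 ∨ μ j < μ i

/-- `μ` is a partition with distinct parts contained inside the shifted shape `lam`. -/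
def FitsD {b : ℕ} (lam μ : Fin b → ℕ) : Prop :=
  DistinctParts μ ∧ ∀ i, μ i ≤ lam i

/-- The coefficient of `q^k` in the rank-generating function `F_lam`:
the number of partitions with distinct parts of size `k` contained inside `lam`. -/
noncomputable def Fcoeff {b : ℕ} (lam : Fin b → ℕ) (k : ℕ) : ℕ :=
  Nat.card {μ : Fin b → ℕ // FitsD lam μ ∧ ∑ i, μ i = k}

/-- The coefficient of `q^k` in the rank-generating function `G_lam` of arbitrary
partitions contained inside the straight Ferrers shape `lam`. -/
noncomputable def Gcoeff {b : ℕ} (lam : Fin b → ℕ) (k : ℕ) : ℕ :=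
  Nat.card {μ : Fin b → ℕ // Antitone μ ∧ (∀ i, μ i ≤ lam i) ∧ ∑ i, μ i = k}

/-- The coefficient of `q^i` in the Gaussian binomial coefficient `(m choose k)_q`,
which is the rank-generating function of partitions inside a `k × (m-k)` rectangle. -/
noncomputable def gaussCoeff (m k i : ℕ) : ℕ :=
  Gcoeff (fun _ : Fin k => m - k) i

open Finset

def pcnt (n : ℕ) (w : Fin n → Bool) (c : Bool) (m : ℕ) : ℕ :=
  (Finset.univ.filter (fun i : Fin n => (i : ℕ) < m ∧ w i = c)).card

def cnt (n : ℕ) (w : Fin n → Bool) (c : Bool) : ℕ :=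
  (Finset.univ.filter (fun i : Fin n => w i = c)).card

def Good (n b : ℕ) (w : Fin n → Bool) : Prop :=
  (Finset.univ.filter (fun i : Fin n => w i = true)).card ≤ b ∧
  ∀ m : ℕ, pcnt n w true m ≤ pcnt n w false m

lemma pcnt_snoc (n m : ℕ) (w : Fin n → Bool) (d c : Bool) :
    pcnt (n+1) (Fin.snoc w d) c m = pcnt n w c m + if n < m ∧ d = c then 1 else 0 := by
  unfold pcnt
  rw [Finset.card_filter, Finset.card_filter, Fin.sum_univ_castSucc]
  simp [Fin.snoc_castSucc, Fin.snoc_last]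

lemma pcnt_ge (n m : ℕ) (w : Fin n → Bool) (c : Bool) (h : n ≤ m) :
    pcnt n w c m = cnt n w c := by
  unfold pcnt cnt
  congr 1
  apply Finset.filter_congr
  intro i _
  simp [i.isLt.trans_le h]

lemma cnt_add (n : ℕ) (w : Fin n → Bool) : cnt n w true + cnt n w false = n := by
  classical
  have h := Finset.card_filter_add_card_filter_not
    (s := (Finset.univ : Finset (Fin n))) (p := fun i => w i = true)
  have h2 : (Finset.univ.filter (fun i : Fin n => ¬ (w i = true))) =
      (Finset.univ.filter (fun i : Fin n => w i = false)) := by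
    apply Finset.filter_congr; intro i _; simp
  unfold cnt
  rw [← h2]
  simpa using h

lemma cnt_snoc (n : ℕ) (w : Fin n → Bool) (d c : Bool) :
    cnt (n+1) (Fin.snoc w d) c = cnt n w c + if d = c then 1 else 0 := by
  have := pcnt_snoc n (n+1) w d c
  rw [pcnt_ge _ _ _ _ (le_refl (n+1)), pcnt_ge n (n+1) w c (by omega)] at this
  simpa using this

lemma cnt_true_eq (n : ℕ) (w : Fin n → Bool) :
    (Finset.univ.filter (fun i : Fin n => w i = true)).card = cnt n w true := rfl

lemma iteA (n m : ℕ) (h : ¬ n < m) (c d : Bool) :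
    (if n < m ∧ c = d then 1 else 0) = 0 := if_neg (fun hc => h hc.1)

lemma iteB (n m : ℕ) (h : n < m) (c : Bool) :
    (if n < m ∧ c = c then 1 else 0) = 1 := if_pos ⟨h, rfl⟩

lemma iteC (n m : ℕ) {c d : Bool} (hcd : c ≠ d) :
    (if n < m ∧ c = d then 1 else 0) = 0 := if_neg (fun hc => hcd hc.2)

lemma good_snoc_false (n b : ℕ) (w : Fin n → Bool) :
    Good (n+1) b (Fin.snoc w false) ↔ Good n b w := by
  unfold Good
  rw [cnt_true_eq, cnt_true_eq, cnt_snoc]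
  rw [if_neg (show ¬ (false:Bool) = true by simp), Nat.add_zero]
  constructor
  · rintro ⟨h1, h2⟩
    refine ⟨h1, fun m => ?_⟩
    by_cases hm : n < m
    · have hn := h2 n
      rw [pcnt_snoc, pcnt_snoc, iteC _ _ (by simp), iteA n n (by omega)] at hn
      rw [pcnt_ge n n w true (le_refl n), pcnt_ge n n w false (le_refl n)] at hn
      rw [pcnt_ge n m w true (by omega), pcnt_ge n m w false (by omega)]
      omega
    · have := h2 m
      rw [pcnt_snoc, pcnt_snoc, iteC _ _ (by simp), iteA n m hm] at this
      omega
  · rintro ⟨h1, h2⟩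
    refine ⟨h1, fun m => ?_⟩
    rw [pcnt_snoc, pcnt_snoc, iteC _ _ (by simp)]
    have := h2 m
    by_cases hm : n < m
    · rw [iteB n m hm]
      omega
    · rw [iteA n m hm]
      omega

lemma good_snoc_true (n b : ℕ) (h : 2*(b+1) ≤ n+1) (w : Fin n → Bool) :
    Good (n+1) (b+1) (Fin.snoc w true) ↔ Good n b w := by
  unfold Good
  rw [cnt_true_eq, cnt_true_eq, cnt_snoc, if_pos rfl]
  constructor
  · rintro ⟨h1, h2⟩
    refine ⟨by omega, fun m => ?_⟩
    by_cases hm : n < m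
    · have hn := h2 n
      rw [pcnt_snoc, pcnt_snoc, iteA n n (by omega), iteA n n (by omega)] at hn
      rw [pcnt_ge n n w true (le_refl n), pcnt_ge n n w false (le_refl n)] at hn
      rw [pcnt_ge n m w true (by omega), pcnt_ge n m w false (by omega)]
      omega
    · have := h2 m
      rw [pcnt_snoc, pcnt_snoc, iteA n m hm, iteA n m hm] at this
      omega
  · rintro ⟨h1, h2⟩
    refine ⟨by omega, fun m => ?_⟩
    rw [pcnt_snoc, pcnt_snoc]
    by_cases hm : n < m
    · rw [iteB n m hm, iteC n m (c := true) (d := false) (by simp)]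
      rw [pcnt_ge n m w true (by omega), pcnt_ge n m w false (by omega)]
      have hadd := cnt_add n w
      omega
    · rw [iteA n m hm, iteA n m hm]
      have := h2 m
      omega

lemma good_zero (n : ℕ) (w : Fin n → Bool) :
    Good n 0 w ↔ w = fun _ => false := by
  constructor
  · rintro ⟨h1, _⟩
    funext i
    by_contra hi
    have hi' : w i = true := by revert hi; cases w i <;> simp
    have : i ∈ Finset.univ.filter (fun i : Fin n => w i = true) := by simp [hi']
    have := Finset.card_pos.2 ⟨i, this⟩
    omega
  · rintro rfl
    constructor
    · simp
    · intro m
      unfold pcnt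
      simp

lemma good_collapse (n b : ℕ) (hn : n = 2*b+1) (w : Fin n → Bool) :
    Good n (b+1) w ↔ Good n b w := by
  unfold Good
  constructor
  · rintro ⟨h1, h2⟩
    refine ⟨?_, h2⟩
    have := h2 n
    rw [pcnt_ge n n w true (le_refl n), pcnt_ge n n w false (le_refl n)] at this
    have hadd := cnt_add n w
    rw [cnt_true_eq]
    omega
  · rintro ⟨h1, h2⟩
    exact ⟨by omega, h2⟩

lemma card_good_zero (n : ℕ) :
    Nat.card {w : Fin n → Bool // Good n 0 w} = 1 := by
  rw [Nat.card_eq_one_iff_unique]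
  constructor
  · constructor
    rintro ⟨w, hw⟩ ⟨v, hv⟩
    apply Subtype.ext
    show w = v
    rw [(good_zero n w).1 hw, (good_zero n v).1 hv]
  · exact ⟨⟨fun _ => false, (good_zero n _).2 rfl⟩⟩

lemma card_split (n b : ℕ) (h : 2*(b+1) ≤ n+1) :
    Nat.card {w : Fin (n+1) → Bool // Good (n+1) (b+1) w} =
    Nat.card {w : Fin n → Bool // Good n (b+1) w} +
    Nat.card {w : Fin n → Bool // Good n b w} := by
  classical
  rw [← Nat.card_sum]
  apply Nat.card_congr
  exact {
    toFun := fun x =>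
      if hc : x.1 (Fin.last n) = true then
        Sum.inr ⟨Fin.init x.1, (good_snoc_true n b h (Fin.init x.1)).1 (by
          have hx := x.2
          rw [← Fin.snoc_init_self x.1, hc] at hx
          exact hx)⟩
      else
        Sum.inl ⟨Fin.init x.1, (good_snoc_false n (b+1) (Fin.init x.1)).1 (by
          have hc' : x.1 (Fin.last n) = false := by
            revert hc; cases x.1 (Fin.last n) <;> simp
          have hx := x.2
          rw [← Fin.snoc_init_self x.1, hc'] at hx
          exact hx)⟩
    invFun := fun s => match s with
      | Sum.inl ⟨w, hw⟩ => ⟨Fin.snoc w false, (good_snoc_false n (b+1) w).2 hw⟩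
      | Sum.inr ⟨w, hw⟩ => ⟨Fin.snoc w true, (good_snoc_true n b h w).2 hw⟩
    left_inv := by
      rintro ⟨w, hw⟩
      by_cases hc : w (Fin.last n) = true
      · simp only [dif_pos hc]
        apply Subtype.ext
        simp only
        rw [← hc]
        exact Fin.snoc_init_self w
      · simp only [dif_neg hc]
        apply Subtype.ext
        simp only
        have hc' : w (Fin.last n) = false := by
          revert hc; cases w (Fin.last n) <;> simp
        rw [← hc']
        exact Fin.snoc_init_self w
    right_inv := by
      rintro (⟨w, hw⟩ | ⟨w, hw⟩)
      · have hl : (Fin.snoc w false : Fin (n+1) → Bool) (Fin.last n) = false :=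
          Fin.snoc_last _ _
        simp only [dif_neg (by simp [hl] : ¬ ((Fin.snoc w false : Fin (n+1) → Bool) (Fin.last n) = true))]
        congr 1
        apply Subtype.ext
        show Fin.init (Fin.snoc w false : Fin (n+1) → Bool) = w
        exact Fin.init_snoc _ _
      · have hl : (Fin.snoc w true : Fin (n+1) → Bool) (Fin.last n) = true :=
          Fin.snoc_last _ _
        simp only [dif_pos hl]
        congr 1
        apply Subtype.ext
        show Fin.init (Fin.snoc w true : Fin (n+1) → Bool) = w
        exact Fin.init_snoc _ _
  }

lemma main_count : ∀ n b : ℕ, 2*b ≤ n →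
    Nat.card {w : Fin n → Bool // Good n b w} = n.choose b := by
  intro n
  induction n with
  | zero =>
    intro b hb
    obtain rfl : b = 0 := by omega
    simpa using card_good_zero 0
  | succ n ih =>
    intro b hb
    cases b with
    | zero => simpa using card_good_zero (n+1)
    | succ b =>
      rw [card_split n b hb]
      have h2 : Nat.card {w : Fin n → Bool // Good n b w} = n.choose b :=
        ih b (by omega)
      have h1 : Nat.card {w : Fin n → Bool // Good n (b+1) w} = n.choose (b+1) := by
        by_cases hn : 2*(b+1) ≤ n
        · exact ih (b+1) hn
        · have hn' : n = 2*b+1 := by omega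
          calc Nat.card {w : Fin n → Bool // Good n (b+1) w}
              = Nat.card {w : Fin n → Bool // Good n b w} :=
                Nat.card_congr (Equiv.subtypeEquivRight (good_collapse n b hn'))
            _ = n.choose b := h2
            _ = n.choose (b+1) := by
                subst hn'
                have hsym := Nat.choose_symm (show b+1 ≤ 2*b+1 by omega)
                have hd : 2*b+1-(b+1) = b := by omega
                rw [hd] at hsym
                exact hsym
      rw [h1, h2]
      rw [Nat.choose_succ_succ (n := n) (k := b)]
      exact Nat.add_comm _ _

/-- The number of binary sequences of length `a` with at most `b` ones such that no
initial segment contains more ones than zeros is `C(a, b)`. -/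
theorem ballot_sequences_count (a b : ℕ) (hb : 1 ≤ b) (hba : 2 * b ≤ a) :
    Nat.card {w : Fin a → Bool //
      (Finset.univ.filter (fun i : Fin a => w i = true)).card ≤ b ∧
      ∀ m : ℕ,
        (Finset.univ.filter (fun i : Fin a => (i : ℕ) < m ∧ w i = true)).card ≤
        (Finset.univ.filter (fun i : Fin a => (i : ℕ) < m ∧ w i = false)).card} =
      a.choose b := main_count a b hba
end

section
/- Fix integers a and b with 1 ≤ b ≤ a/2, and let λ = ⟨a-1, a-3, ..., a-(2b-1)⟩. Then the number of partitions with distinct parts contained inside λ (including the empty partition) is exactly the binomial coefficient C(a, b). -/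
namespace DPProof

/-- The staircase shape with odd gaps. -/
def shape (a b : ℕ) : Fin b → ℕ := fun i : Fin b => a - (2 * (i : ℕ) + 1)

noncomputable def Dc (a b : ℕ) : ℕ :=
  Nat.card {μ : Fin b → ℕ // FitsD (shape a b) μ}

noncomputable def Ac (a b : ℕ) : ℕ :=
  Nat.card {μ : Fin b → ℕ // FitsD (shape a b) μ ∧ ∀ i, 1 ≤ μ i}

lemma finite_subtype {b : ℕ} (P : (Fin b → ℕ) → Prop) (lam : Fin b → ℕ)
    (h : ∀ μ, P μ → ∀ i, μ i ≤ lam i) : Finite {μ : Fin b → ℕ // P μ} := by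
  have hlt : ∀ μ : {μ : Fin b → ℕ // P μ}, ∀ i, μ.1 i < lam i + 1 :=
    fun μ i => Nat.lt_succ_of_le (h _ μ.2 i)
  exact Finite.of_injective
    (fun μ => (fun i => (⟨μ.1 i, hlt μ i⟩ : Fin (lam i + 1)) : ∀ i, Fin (lam i + 1)))
    (fun μ ν hh => Subtype.ext (funext fun i => congrArg Fin.val (congrFun hh i)))

lemma dp_init {b : ℕ} {μ : Fin (b + 1) → ℕ} (h : DistinctParts μ) :
    DistinctParts (Fin.init μ) := by
  intro i j hij
  have := h i.castSucc j.castSucc (Fin.castSucc_lt_castSucc_iff.mpr hij)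
  simpa [Fin.init] using this

lemma dp_snoc_zero {b : ℕ} {ν : Fin b → ℕ} (h : DistinctParts ν) :
    DistinctParts (Fin.snoc ν 0) := by
  intro i j hij
  rcases Fin.eq_castSucc_or_eq_last j with ⟨j', rfl⟩ | rfl
  · rcases Fin.eq_castSucc_or_eq_last i with ⟨i', rfl⟩ | rfl
    · have := h i' j' (Fin.castSucc_lt_castSucc_iff.mp hij)
      simpa [Fin.snoc_castSucc] using this
    · exact absurd hij (by simpa using (Fin.castSucc_lt_last j').not_gt)
  · left; simp

/-- Packaging the "last part is zero" piece as a shorter tuple. -/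
def snocEquiv {b : ℕ} (P : (Fin (b + 1) → ℕ) → Prop) (P' : (Fin b → ℕ) → Prop)
    (h1 : ∀ μ, P μ → μ (Fin.last b) = 0 → P' (Fin.init μ))
    (h2 : ∀ ν, P' ν → P (Fin.snoc ν 0)) :
    {μ : Fin (b + 1) → ℕ // P μ ∧ μ (Fin.last b) = 0} ≃ {ν : Fin b → ℕ // P' ν} where
  toFun μ := ⟨Fin.init μ.1, h1 _ μ.2.1 μ.2.2⟩
  invFun ν := ⟨Fin.snoc ν.1 0, h2 _ ν.2, by simp⟩
  left_inv μ := Subtype.ext (by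
    have := Fin.snoc_init_self μ.1
    rw [μ.2.2] at this
    exact this)
  right_inv ν := Subtype.ext (by simp)

lemma fits_init {b : ℕ} {f μ : Fin (b + 1) → ℕ} (h : FitsD f μ) :
    FitsD (Fin.init f) (Fin.init μ) := by
  refine ⟨dp_init h.1, fun i => ?_⟩
  simpa [Fin.init] using h.2 i.castSucc

lemma fits_snoc_zero {b : ℕ} {f : Fin (b + 1) → ℕ} {ν : Fin b → ℕ}
    (h : FitsD (Fin.init f) ν) : FitsD f (Fin.snoc ν 0) := by
  refine ⟨dp_snoc_zero h.1, fun i => ?_⟩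
  rcases Fin.eq_castSucc_or_eq_last i with ⟨i', rfl⟩ | rfl
  · simpa [Fin.init] using h.2 i'
  · simp

lemma pos_of_last_ne {b : ℕ} {μ : Fin (b + 1) → ℕ} (hd : DistinctParts μ)
    (hl : μ (Fin.last b) ≠ 0) : ∀ i, 1 ≤ μ i := by
  intro i
  rcases eq_or_ne i (Fin.last b) with rfl | hi
  · omega
  · have hlt : i < Fin.last b := lt_of_le_of_ne (Fin.le_last i) hi
    rcases hd i (Fin.last b) hlt with h0 | h0 <;> omega

/-- Split by whether the last part vanishes. -/
lemma card_split {b : ℕ} (f : Fin (b + 1) → ℕ) :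
    Nat.card {μ : Fin (b + 1) → ℕ // FitsD f μ} =
      Nat.card {μ : Fin b → ℕ // FitsD (Fin.init f) μ} +
        Nat.card {μ : Fin (b + 1) → ℕ // FitsD f μ ∧ ∀ i, 1 ≤ μ i} := by
  classical
  haveI : Finite {μ : Fin (b + 1) → ℕ // FitsD f μ} :=
    finite_subtype _ f (fun μ h => h.2)
  rw [← Nat.card_congr (Equiv.sumCompl
      (fun x : {μ : Fin (b + 1) → ℕ // FitsD f μ} => x.1 (Fin.last b) = 0)),
    Nat.card_sum]
  congr 1
  · exact Nat.card_congr ((Equiv.subtypeSubtypeEquivSubtypeInter _ _).trans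
      (snocEquiv (FitsD f) (FitsD (Fin.init f))
        (fun μ h _ => fits_init h) (fun ν h => fits_snoc_zero h)))
  · refine Nat.card_congr ((Equiv.subtypeSubtypeEquivSubtypeInter (FitsD f)
      (fun μ => ¬ μ (Fin.last b) = 0)).trans
      (Equiv.subtypeEquivRight fun μ => ?_))
    constructor
    · rintro ⟨hf, hl⟩
      exact ⟨hf, pos_of_last_ne hf.1 hl⟩
    · rintro ⟨hf, hp⟩
      exact ⟨hf, by have := hp (Fin.last b); omega⟩

/-- Split (for tuples positive except possibly at the last spot) by whether the
last part vanishes. -/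
lemma card_split' {b : ℕ} (f : Fin (b + 1) → ℕ) :
    Nat.card {μ : Fin (b + 1) → ℕ //
        FitsD f μ ∧ ∀ i, i ≠ Fin.last b → 1 ≤ μ i} =
      Nat.card {μ : Fin b → ℕ // FitsD (Fin.init f) μ ∧ ∀ i, 1 ≤ μ i} +
        Nat.card {μ : Fin (b + 1) → ℕ // FitsD f μ ∧ ∀ i, 1 ≤ μ i} := by
  classical
  haveI : Finite {μ : Fin (b + 1) → ℕ //
      FitsD f μ ∧ ∀ i, i ≠ Fin.last b → 1 ≤ μ i} :=
    finite_subtype _ f (fun μ h => h.1.2)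
  rw [← Nat.card_congr (Equiv.sumCompl
      (fun x : {μ : Fin (b + 1) → ℕ //
          FitsD f μ ∧ ∀ i, i ≠ Fin.last b → 1 ≤ μ i} => x.1 (Fin.last b) = 0)),
    Nat.card_sum]
  congr 1
  · refine Nat.card_congr ((Equiv.subtypeSubtypeEquivSubtypeInter _ _).trans
      (snocEquiv _ _ ?_ ?_))
    · rintro μ ⟨hf, hp⟩ _
      refine ⟨fits_init hf, fun i => ?_⟩
      simpa [Fin.init] using hp i.castSucc (Fin.castSucc_lt_last i).ne
    · rintro ν ⟨hf, hp⟩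
      refine ⟨fits_snoc_zero hf, fun i hi => ?_⟩
      rcases Fin.eq_castSucc_or_eq_last i with ⟨i', rfl⟩ | rfl
      · simpa using hp i'
      · exact absurd rfl hi
  · refine Nat.card_congr ((Equiv.subtypeSubtypeEquivSubtypeInter
      (fun μ => FitsD f μ ∧ ∀ i, i ≠ Fin.last b → 1 ≤ μ i)
      (fun μ => ¬ μ (Fin.last b) = 0)).trans
      (Equiv.subtypeEquivRight fun μ => ?_))
    constructor
    · rintro ⟨⟨hf, hp⟩, hl⟩
      refine ⟨hf, fun i => ?_⟩
      rcases eq_or_ne i (Fin.last b) with rfl | hi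
      · omega
      · exact hp i hi
    · rintro ⟨hf, hp⟩
      exact ⟨⟨hf, fun i _ => hp i⟩, by have := hp (Fin.last b); omega⟩

lemma init_shape (a b : ℕ) : Fin.init (shape a (b + 1)) = shape a b := by
  funext i
  simp [Fin.init, shape]

lemma Dc_zero (a : ℕ) : Dc a 0 = 1 := by
  haveI : Nonempty {μ : Fin 0 → ℕ // FitsD (shape a 0) μ} :=
    ⟨⟨fun i => i.elim0, fun i => i.elim0, fun i => i.elim0⟩⟩
  haveI : Subsingleton {μ : Fin 0 → ℕ // FitsD (shape a 0) μ} :=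
    ⟨fun x y => Subtype.ext (funext fun i => i.elim0)⟩
  exact Nat.card_unique

lemma Ac_zero (a : ℕ) : Ac a 0 = 1 := by
  haveI : Nonempty {μ : Fin 0 → ℕ // FitsD (shape a 0) μ ∧ ∀ i, 1 ≤ μ i} :=
    ⟨⟨fun i => i.elim0, ⟨fun i => i.elim0, fun i => i.elim0⟩, fun i => i.elim0⟩⟩
  haveI : Subsingleton {μ : Fin 0 → ℕ // FitsD (shape a 0) μ ∧ ∀ i, 1 ≤ μ i} :=
    ⟨fun x y => Subtype.ext (funext fun i => i.elim0)⟩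
  exact Nat.card_unique

lemma Ac_empty (b : ℕ) (hb : 1 ≤ b) : Ac (2 * b - 1) b = 0 := by
  obtain ⟨b', rfl⟩ := Nat.exists_eq_add_of_le hb
  haveI : IsEmpty {μ : Fin (1 + b') → ℕ //
      FitsD (shape (2 * (1 + b') - 1) (1 + b')) μ ∧ ∀ i, 1 ≤ μ i} := by
    constructor
    rintro ⟨μ, ⟨hd, hle⟩, hp⟩
    have h1 := hle ⟨b', by omega⟩
    have h2 := hp ⟨b', by omega⟩
    simp only [shape] at h1
    omega
  exact Nat.card_of_isEmpty

lemma Dc_split (a b : ℕ) : Dc a (b + 1) = Dc a b + Ac a (b + 1) := by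
  have h := card_split (b := b) (shape a (b + 1))
  rwa [init_shape] at h

/-- The subtract-one / add-one bijection. -/
def shiftEquiv (a b : ℕ) (hab : 2 * (b + 1) ≤ a) :
    {μ : Fin (b + 1) → ℕ // FitsD (shape a (b + 1)) μ ∧ ∀ i, 1 ≤ μ i} ≃
      {ν : Fin (b + 1) → ℕ //
        FitsD (shape (a - 1) (b + 1)) ν ∧ ∀ i, i ≠ Fin.last b → 1 ≤ ν i} where
  toFun μ := by
    refine ⟨fun i => μ.1 i - 1, ⟨?_, ?_⟩, ?_⟩
    · intro i j hij
      show μ.1 j - 1 = 0 ∨ μ.1 j - 1 < μ.1 i - 1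
      rcases μ.2.1.1 i j hij with h0 | h0
      · have := μ.2.2 j; omega
      · have := μ.2.2 j; omega
    · intro i
      show μ.1 i - 1 ≤ shape (a - 1) (b + 1) i
      have h1 := μ.2.1.2 i
      simp only [shape] at h1 ⊢
      omega
    · intro i hi
      show 1 ≤ μ.1 i - 1
      have hlt : i < Fin.last b := lt_of_le_of_ne (Fin.le_last i) hi
      have hl2 := μ.2.2 (Fin.last b)
      rcases μ.2.1.1 i (Fin.last b) hlt with h0 | h0 <;> omega
  invFun ν := by
    refine ⟨fun i => ν.1 i + 1, ⟨?_, ?_⟩, ?_⟩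
    · intro i j hij
      show ν.1 j + 1 = 0 ∨ ν.1 j + 1 < ν.1 i + 1
      rcases ν.2.1.1 i j hij with h0 | h0
      · right
        rcases eq_or_ne j (Fin.last b) with rfl | hj
        · have := ν.2.2 i hij.ne
          omega
        · have := ν.2.2 j hj
          omega
      · right; omega
    · intro i
      show ν.1 i + 1 ≤ shape a (b + 1) i
      have h1 := ν.2.1.2 i
      have h2 : (i : ℕ) < b + 1 := i.isLt
      simp only [shape] at h1 ⊢
      omega
    · intro i
      show 1 ≤ ν.1 i + 1
      omega
  left_inv μ := Subtype.ext (funext fun i => by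
    show (μ.1 i - 1) + 1 = μ.1 i
    have := μ.2.2 i
    omega)
  right_inv ν := Subtype.ext (funext fun i => by
    show (ν.1 i + 1) - 1 = ν.1 i
    omega)

lemma Ac_pascal (a b : ℕ) (hab : 2 * (b + 1) ≤ a) :
    Ac a (b + 1) = Ac (a - 1) b + Ac (a - 1) (b + 1) := by
  have h1 : Ac a (b + 1) = Nat.card {ν : Fin (b + 1) → ℕ //
      FitsD (shape (a - 1) (b + 1)) ν ∧ ∀ i, i ≠ Fin.last b → 1 ≤ ν i} :=
    Nat.card_congr (shiftEquiv a b hab)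
  have h2 := card_split' (b := b) (shape (a - 1) (b + 1))
  rw [init_shape] at h2
  rw [h1, h2]; rfl

lemma Ac_closed : ∀ a b : ℕ, 2 * b ≤ a →
    Ac a b + Nat.choose (a - 1) (a + 1 - b) = Nat.choose (a - 1) b := by
  intro a
  induction a using Nat.strong_induction_on with
  | _ a ih =>
    intro b hab
    match b with
    | 0 =>
      rw [Ac_zero, Nat.choose_eq_zero_of_lt (by omega), Nat.choose_zero_right]
    | b' + 1 =>
      have ha2 : 2 ≤ a := by omega
      rw [Ac_pascal a b' hab]
      rcases eq_or_lt_of_le hab with heq | hlt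
      · -- a = 2 * (b' + 1)
        have he : Ac (a - 1) (b' + 1) = 0 := by
          have := Ac_empty (b' + 1) (by omega)
          have hh : 2 * (b' + 1) - 1 = a - 1 := by omega
          rwa [hh] at this
        have hIH := ih (a - 1) (by omega) b' (by omega)
        have e1 : (a - 1) + 1 - b' = b' + 2 := by omega
        have e2 : a - 1 - 1 = 2 * b' := by omega
        have e3 : a - 1 = 2 * b' + 1 := by omega
        have e4 : a + 1 - (b' + 1) = b' + 2 := by omega
        rw [e1, e2] at hIH
        rw [e3] at hIH
        rw [he, e3, e4]
        have p1 : (2 * b' + 1).choose (b' + 2) =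
            (2 * b').choose (b' + 1) + (2 * b').choose (b' + 2) :=
          Nat.choose_succ_succ' (2 * b') (b' + 1)
        have p2 : (2 * b' + 1).choose (b' + 1) =
            (2 * b').choose b' + (2 * b').choose (b' + 1) :=
          Nat.choose_succ_succ' (2 * b') b'
        omega
      · -- 2 * (b' + 1) < a
        obtain ⟨d, rfl⟩ : ∃ d, a = b' + d + 2 := ⟨a - b' - 2, by omega⟩
        have hIH1 := ih (b' + d + 1) (by omega) (b' + 1) (by omega)
        have hIH2 := ih (b' + d + 1) (by omega) b' (by omega)
        have e0 : b' + d + 2 - 1 = b' + d + 1 := by omega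
        have e1 : b' + d + 1 - 1 = b' + d := by omega
        have e2 : b' + d + 1 + 1 - (b' + 1) = d + 1 := by omega
        have e3 : b' + d + 1 + 1 - b' = d + 2 := by omega
        have e4 : b' + d + 2 + 1 - (b' + 1) = d + 2 := by omega
        rw [e1, e2] at hIH1
        rw [e1, e3] at hIH2
        rw [e0, e4]
        have p1 : (b' + d + 1).choose (d + 2) =
            (b' + d).choose (d + 1) + (b' + d).choose (d + 2) :=
          Nat.choose_succ_succ' (b' + d) (d + 1)
        have p2 : (b' + d + 1).choose (b' + 1) =
            (b' + d).choose b' + (b' + d).choose (b' + 1) :=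
          Nat.choose_succ_succ' (b' + d) b'
        omega

lemma Dc_eq : ∀ b a : ℕ, 2 * b ≤ a → Dc a b = Nat.choose a b := by
  intro b
  induction b with
  | zero => intro a _; rw [Dc_zero, Nat.choose_zero_right]
  | succ b' ihb =>
    intro a hab
    rw [Dc_split, ihb a (by omega)]
    have hc := Ac_closed a (b' + 1) hab
    match b', a with
    | 0, a =>
      obtain ⟨e, rfl⟩ : ∃ e, a = e + 2 := ⟨a - 2, by omega⟩
      have e1 : e + 2 - 1 = e + 1 := by omega
      have e2 : e + 2 + 1 - (0 + 1) = e + 2 := by omega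
      rw [e1, e2] at hc
      have h0 : Nat.choose (e + 1) (e + 2) = 0 := Nat.choose_eq_zero_of_lt (by omega)
      have h1 : Nat.choose (e + 1) (0 + 1) = e + 1 := Nat.choose_one_right _
      have h2 : Nat.choose (e + 2) 0 = 1 := Nat.choose_zero_right _
      have h3 : Nat.choose (e + 2) (0 + 1) = e + 2 := Nat.choose_one_right _
      omega
    | b'' + 1, a =>
      obtain ⟨e, rfl⟩ : ∃ e, a = b'' + e + 3 := ⟨a - b'' - 3, by omega⟩
      have e0 : b'' + e + 3 - 1 = b'' + e + 2 := by omega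
      have e1 : b'' + e + 3 + 1 - (b'' + 1 + 1) = e + 2 := by omega
      rw [e0, e1] at hc
      have hsym : Nat.choose (b'' + e + 2) (e + 2) = Nat.choose (b'' + e + 2) b'' := by
        have hd : (b'' + e + 2) - b'' = e + 2 := by omega
        rw [← hd]
        exact Nat.choose_symm (by omega)
      have p1 : (b'' + e + 3).choose (b'' + 1 + 1) =
          (b'' + e + 2).choose (b'' + 1) + (b'' + e + 2).choose (b'' + 1 + 1) :=
        Nat.choose_succ_succ' (b'' + e + 2) (b'' + 1)
      have p2 : (b'' + e + 3).choose (b'' + 1) =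
          (b'' + e + 2).choose b'' + (b'' + e + 2).choose (b'' + 1) :=
        Nat.choose_succ_succ' (b'' + e + 2) b''
      omega

end DPProof


/-- The number of partitions with distinct parts contained inside
`λ = ⟨a-1, a-3, …, a-(2b-1)⟩` is the binomial coefficient `C(a, b)`. -/
theorem distinct_parts_in_odd_shape_count (a b : ℕ) (hb : 1 ≤ b) (hba : 2 * b ≤ a) :
    Nat.card {μ : Fin b → ℕ // FitsD (fun i : Fin b => a - (2 * (i : ℕ) + 1)) μ} =
      a.choose b := by
  exact DPProof.Dc_eq b a hba
end

section
/- Let n ≥ 4 and let λ = ⟨n, n-1, n-2, n-3⟩. Then the rank-generating function F_λ(q) of partitions with distinct parts contained inside λ satisfies the identity F_λ(q) = 1 + q·[C(n+1,2)]_q + q^6·[C(n+1,4)]_q, where [C(n+1,2)]_q and [C(n+1,4)]_q are the Gaussian binomial coefficients (n+1 choose 2)_q and (n+1 choose 4)_q respectively. -/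
set_option maxHeartbeats 1000000 in
lemma dp4 (μ : Fin 4 → ℕ) : DistinctParts μ ↔
    (μ 1 = 0 ∨ μ 1 < μ 0) ∧ (μ 2 = 0 ∨ μ 2 < μ 0) ∧ (μ 2 = 0 ∨ μ 2 < μ 1) ∧
    (μ 3 = 0 ∨ μ 3 < μ 0) ∧ (μ 3 = 0 ∨ μ 3 < μ 1) ∧ (μ 3 = 0 ∨ μ 3 < μ 2) := by
  constructor
  · intro h
    exact ⟨h 0 1 (by decide), h 0 2 (by decide), h 1 2 (by decide),
      h 0 3 (by decide), h 1 3 (by decide), h 2 3 (by decide)⟩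
  · rintro ⟨h1,h2,h3,h4,h5,h6⟩ i j hij
    fin_cases i <;> fin_cases j <;> simp_all

set_option maxHeartbeats 1000000 in
lemma anti4 (μ : Fin 4 → ℕ) : Antitone μ ↔ μ 1 ≤ μ 0 ∧ μ 2 ≤ μ 1 ∧ μ 3 ≤ μ 2 := by
  constructor
  · intro h
    exact ⟨h (by decide), h (by decide), h (by decide)⟩
  · rintro ⟨h1,h2,h3⟩ i j hij
    fin_cases i <;> fin_cases j <;> simp_all <;> omega

lemma anti2 (μ : Fin 2 → ℕ) : Antitone μ ↔ μ 1 ≤ μ 0 := by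
  constructor
  · intro h; exact h (by decide)
  · intro h1 i j hij
    fin_cases i <;> fin_cases j <;> simp_all

lemma finite_bounded {b : ℕ} (lam : Fin b → ℕ) (P : (Fin b → ℕ) → Prop)
    (hP : ∀ μ, P μ → ∀ i, μ i ≤ lam i) : Finite {μ : Fin b → ℕ // P μ} := by
  apply Finite.of_injective
    (fun μ => (fun i => (⟨μ.1 i, Nat.lt_succ_of_le (hP _ μ.2 i)⟩ : Fin (lam i + 1))))
  intro μ ν h
  apply Subtype.ext
  funext i
  exact congrArg Fin.val (congrFun h i)

set_option maxHeartbeats 1000000 in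
lemma cardA (n k : ℕ) (hn : 4 ≤ n) (hk : 1 ≤ k) :
    Nat.card {x : {μ : Fin 4 → ℕ // FitsD ![n, n-1, n-2, n-3] μ ∧ ∑ i, μ i = k} // x.1 2 = 0}
      = gaussCoeff (n + 1) 2 (k - 1) := by
  rw [gaussCoeff, Gcoeff]
  apply Nat.card_congr
  refine ⟨fun x => ⟨![x.1.1 0 - 1, x.1.1 1], ?_⟩,
          fun ν => ⟨⟨![ν.1 0 + 1, ν.1 1, 0, 0], ?_⟩, ?_⟩, ?_, ?_⟩
  · obtain ⟨⟨μ, ⟨hd, hb⟩, hs⟩, h2⟩ := x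
    have h2' : μ 2 = 0 := h2
    have b0 : μ 0 ≤ n := by simpa using hb 0
    have b1 : μ 1 ≤ n - 1 := by simpa using hb 1
    rw [dp4] at hd
    rw [Fin.sum_univ_four] at hs
    refine ⟨(anti2 _).2 ?_, fun i => ?_, ?_⟩
    · simp
      omega
    · fin_cases i <;> simp <;> omega
    · rw [Fin.sum_univ_two]
      simp
      omega
  · obtain ⟨ν, ha, hb, hs⟩ := ν
    rw [anti2] at ha
    rw [Fin.sum_univ_two] at hs
    have b0 : ν 0 ≤ n + 1 - 2 := hb 0
    have b1 : ν 1 ≤ n + 1 - 2 := hb 1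
    refine ⟨⟨(dp4 _).2 ?_, fun i => ?_⟩, ?_⟩
    · simp
      omega
    · fin_cases i <;> simp <;> omega
    · rw [Fin.sum_univ_four]
      simp
      omega
  · simp
  · rintro ⟨⟨μ, ⟨hd, hb⟩, hs⟩, h2⟩
    have h2' : μ 2 = 0 := h2
    rw [dp4] at hd
    rw [Fin.sum_univ_four] at hs
    apply Subtype.ext; apply Subtype.ext
    funext i
    fin_cases i <;> simp <;> omega
  · rintro ⟨ν, ha, hb, hs⟩
    apply Subtype.ext
    funext i
    fin_cases i <;> simp

set_option maxHeartbeats 1000000 in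
lemma cardB (n k : ℕ) (hn : 4 ≤ n) (hk : 6 ≤ k) :
    Nat.card {x : {μ : Fin 4 → ℕ // FitsD ![n, n-1, n-2, n-3] μ ∧ ∑ i, μ i = k} // ¬ x.1 2 = 0}
      = gaussCoeff (n + 1) 4 (k - 6) := by
  rw [gaussCoeff, Gcoeff]
  apply Nat.card_congr
  refine ⟨fun x => ⟨![x.1.1 0 - 3, x.1.1 1 - 2, x.1.1 2 - 1, x.1.1 3], ?_⟩,
          fun ν => ⟨⟨![ν.1 0 + 3, ν.1 1 + 2, ν.1 2 + 1, ν.1 3], ?_⟩, ?_⟩, ?_, ?_⟩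
  · obtain ⟨⟨μ, ⟨hd, hb⟩, hs⟩, h2⟩ := x
    have h2' : ¬ μ 2 = 0 := h2
    have b0 : μ 0 ≤ n := by simpa using hb 0
    have b1 : μ 1 ≤ n - 1 := by simpa using hb 1
    have b2 : μ 2 ≤ n - 2 := by simpa using hb 2
    have b3 : μ 3 ≤ n - 3 := by simpa using hb 3
    rw [dp4] at hd
    rw [Fin.sum_univ_four] at hs
    refine ⟨(anti4 _).2 ?_, fun i => ?_, ?_⟩
    · simp
      omega
    · fin_cases i <;> simp <;> omega
    · rw [Fin.sum_univ_four]
      simp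
      omega
  · obtain ⟨ν, ha, hb, hs⟩ := ν
    rw [anti4] at ha
    rw [Fin.sum_univ_four] at hs
    have b0 : ν 0 ≤ n + 1 - 4 := hb 0
    have b1 : ν 1 ≤ n + 1 - 4 := hb 1
    have b2 : ν 2 ≤ n + 1 - 4 := hb 2
    have b3 : ν 3 ≤ n + 1 - 4 := hb 3
    refine ⟨⟨(dp4 _).2 ?_, fun i => ?_⟩, ?_⟩
    · simp
      omega
    · fin_cases i <;> simp <;> omega
    · rw [Fin.sum_univ_four]
      simp
      omega
  · simp
  · rintro ⟨⟨μ, ⟨hd, hb⟩, hs⟩, h2⟩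
    have h2' : ¬ μ 2 = 0 := h2
    rw [dp4] at hd
    apply Subtype.ext; apply Subtype.ext
    funext i
    fin_cases i <;> simp <;> omega
  · rintro ⟨ν, ha, hb, hs⟩
    apply Subtype.ext
    funext i
    fin_cases i <;> simp

lemma cardB0 (n k : ℕ) (hk : k < 6) :
    Nat.card {x : {μ : Fin 4 → ℕ // FitsD ![n, n-1, n-2, n-3] μ ∧ ∑ i, μ i = k} // ¬ x.1 2 = 0}
      = 0 := by
  rw [Nat.card_eq_zero]
  left
  constructor
  rintro ⟨⟨μ, ⟨hd, hb⟩, hs⟩, h2⟩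
  have h2' : ¬ μ 2 = 0 := h2
  rw [dp4] at hd
  rw [Fin.sum_univ_four] at hs
  omega


/-- For `λ = ⟨n, n-1, n-2, n-3⟩` with `n ≥ 4`,
`F_λ(q) = 1 + q (n+1 choose 2)_q + q^6 (n+1 choose 4)_q`, stated coefficientwise. -/
theorem truncated_staircase_decomposition (n : ℕ) (hn : 4 ≤ n) (k : ℕ) :
    Fcoeff ![n, n - 1, n - 2, n - 3] k =
      (if k = 0 then 1 else 0) +
      (if 1 ≤ k then gaussCoeff (n + 1) 2 (k - 1) else 0) +
      (if 6 ≤ k then gaussCoeff (n + 1) 4 (k - 6) else 0) := by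
  rcases Nat.eq_zero_or_pos k with rfl | hk
  · rw [if_pos rfl, if_neg (by omega : ¬ (1:ℕ) ≤ 0), if_neg (by omega : ¬ (6:ℕ) ≤ 0)]
    show Fcoeff ![n, n - 1, n - 2, n - 3] 0 = 1
    rw [Fcoeff, Nat.card_eq_one_iff_unique]
    constructor
    · constructor
      rintro ⟨μ, hμ, hs⟩ ⟨ν, hν, hs'⟩
      rw [Finset.sum_eq_zero_iff] at hs hs'
      apply Subtype.ext
      funext i
      show μ i = ν i
      rw [hs i (Finset.mem_univ i), hs' i (Finset.mem_univ i)]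
    · exact ⟨⟨fun _ => 0, ⟨fun i j _ => Or.inl rfl, fun i => Nat.zero_le _⟩, by simp⟩⟩
  · have hk1 : 1 ≤ k := hk
    have hFin : Finite {μ : Fin 4 → ℕ // FitsD ![n, n-1, n-2, n-3] μ ∧ ∑ i, μ i = k} :=
      finite_bounded _ _ (fun μ h i => h.1.2 i)
    rw [Fcoeff,
      ← Nat.card_congr (Equiv.sumCompl
        (fun μ : {μ : Fin 4 → ℕ // FitsD ![n, n-1, n-2, n-3] μ ∧ ∑ i, μ i = k} => μ.1 2 = 0)),
      Nat.card_sum, cardA n k hn hk1, if_neg (by omega : ¬ k = 0), if_pos hk1]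
    rcases lt_or_ge k 6 with h6 | h6
    · rw [cardB0 n k h6, if_neg (by omega)]
      omega
    · rw [cardB n k hn h6, if_pos h6]
      omega
end

section
/- Let d_{a,i} denote the coefficient of q^i in the Gaussian binomial coefficient (a+4 choose 4)_q, and for c ≥ 0 let f(a,c) = d_{a,2a-c} - d_{a,2a-c-1}. Then f(a,c) ≥ 0 for all a ≥ 0 and all 0 ≤ c ≤ 2a. -/
/-- `dZ a i` is the coefficient of `q^i` in `(a+4 choose 4)_q`, with value `0` for `i < 0`. -/
noncomputable def dZ (a : ℕ) (i : ℤ) : ℕ :=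
  if 0 ≤ i then gaussCoeff (a + 4) 4 i.toNat else 0

/-- A vector `Fin 4 → ℕ` is antitone as soon as its three consecutive
inequalities hold. -/
lemma anti4_s6 (v : Fin 4 → ℕ) (h01 : v 1 ≤ v 0) (h12 : v 2 ≤ v 1) (h23 : v 3 ≤ v 2) :
    Antitone v := by
  intro i j hij
  fin_cases i <;> fin_cases j <;> simp_all [Fin.le_def] <;> omega

/-- The injection step: a partition `μ` inside the `4 × a` box of weight `n - 1` is mapped
to one of weight `n`.  If `μ 0 < a` we simply increase the top part.  If `μ 0 = a`, we pass
to the column-multiplicity coordinates `c₂ = μ 1 - μ 2`, `c₃ = μ 2 - μ 3`, `c₄ = μ 3`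
(which form a partition of `n - 1 - a` into parts `1, 2, 3`), double them into parts
`2, 4, 3+3`, pad with parts `2` (and possibly one `3`) up to weight `n`, and read the
result back as a partition with no column of height exactly one (`ν 0 = ν 1`). -/
noncomputable def stepFun (a n : ℕ) (μ : Fin 4 → ℕ) : Fin 4 → ℕ :=
  if μ 0 = a then
    let d2 := (μ 1 - μ 2) + (if n % 2 = 0 then a + 1 - n/2 else a - n/2 - 1)
    let d3 := 2 * μ 3 + n % 2
    let d4 := μ 2 - μ 3
    ![d2+d3+d4, d2+d3+d4, d3+d4, d4]
  else ![μ 0 + 1, μ 1, μ 2, μ 3]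

lemma stepFun_pos (a n : ℕ) (μ : Fin 4 → ℕ) (h0 : μ 0 = a) :
    stepFun a n μ = (fun (d2 d3 d4 : ℕ) => ![d2+d3+d4, d2+d3+d4, d3+d4, d4])
      ((μ 1 - μ 2) + (if n % 2 = 0 then a + 1 - n/2 else a - n/2 - 1))
      (2 * μ 3 + n % 2) (μ 2 - μ 3) := by
  rw [stepFun, if_pos h0]

lemma stepFun_neg (a n : ℕ) (μ : Fin 4 → ℕ) (h0 : ¬ μ 0 = a) :
    stepFun a n μ = ![μ 0 + 1, μ 1, μ 2, μ 3] := by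
  rw [stepFun, if_neg h0]

lemma finiteBox (a k : ℕ) :
    Finite {μ : Fin 4 → ℕ // Antitone μ ∧ (∀ i, μ i ≤ a) ∧ ∑ i, μ i = k} := by
  apply Finite.of_injective
    (fun μ => (fun i => (⟨μ.1 i, Nat.lt_succ_of_le (μ.2.2.1 i)⟩ : Fin (a+1)) : Fin 4 → Fin (a+1)))
  intro μ ν h
  apply Subtype.ext; funext i
  exact congrArg Fin.val (congrFun h i)

lemma step_mem (a n : ℕ) (h1 : 1 ≤ n) (h2 : n ≤ 2*a) (μ : Fin 4 → ℕ)
    (hA : Antitone μ) (hb : ∀ i, μ i ≤ a) (hs : ∑ i, μ i = n - 1) :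
    Antitone (stepFun a n μ) ∧ (∀ i, stepFun a n μ i ≤ a) ∧ ∑ i, stepFun a n μ i = n := by
  have h01 : μ 1 ≤ μ 0 := hA (by decide : (0:Fin 4) ≤ 1)
  have h12 : μ 2 ≤ μ 1 := hA (by decide : (1:Fin 4) ≤ 2)
  have h23 : μ 3 ≤ μ 2 := hA (by decide : (2:Fin 4) ≤ 3)
  rw [Fin.sum_univ_four] at hs
  by_cases h0 : μ 0 = a
  · rw [stepFun_pos a n μ h0]
    set d2 := (μ 1 - μ 2) + (if n % 2 = 0 then a + 1 - n/2 else a - n/2 - 1) with hd2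
    set d3 := 2 * μ 3 + n % 2 with hd3
    set d4 := μ 2 - μ 3 with hd4
    have hsum : 2*d2 + 3*d3 + 4*d4 = n := by
      rw [hd2, hd3, hd4]; split_ifs with hp <;> omega
    refine ⟨anti4_s6 _ (by simp <;> omega) (by simp <;> omega) (by simp <;> omega), ?_, ?_⟩
    · intro i; fin_cases i <;> simp <;> omega
    · rw [Fin.sum_univ_four]; simp <;> omega
  · rw [stepFun_neg a n μ h0]
    have hb0 := hb 0
    refine ⟨anti4_s6 _ (by simp <;> omega) (by simp <;> omega) (by simp <;> omega), ?_, ?_⟩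
    · intro i
      have := hb 1; have := hb 2; have := hb 3
      fin_cases i <;> simp <;> omega
    · rw [Fin.sum_univ_four]; simp <;> omega

/-- Unimodality step for the `4 × a` box: the number of partitions of `n-1` inside the
box is at most the number of partitions of `n`, whenever `1 ≤ n ≤ 2a`. -/
lemma gauss_key (a n : ℕ) (h1 : 1 ≤ n) (h2 : n ≤ 2*a) :
    Gcoeff (fun _ : Fin 4 => a) (n-1) ≤ Gcoeff (fun _ : Fin 4 => a) n := by
  unfold Gcoeff
  haveI := finiteBox a n
  apply Nat.card_le_card_of_injective
    (f := fun μ => (⟨stepFun a n μ.1,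
      step_mem a n h1 h2 μ.1 μ.2.1 μ.2.2.1 μ.2.2.2⟩ :
      {ν : Fin 4 → ℕ // Antitone ν ∧ (∀ i, ν i ≤ a) ∧ ∑ i, ν i = n}))
  rintro ⟨μ, hAμ, hbμ, hsμ⟩ ⟨ν, hAν, hbν, hsν⟩ hh
  simp only [Subtype.mk.injEq] at hh ⊢
  have hμ01 : μ 1 ≤ μ 0 := hAμ (by decide : (0:Fin 4) ≤ 1)
  have hμ12 : μ 2 ≤ μ 1 := hAμ (by decide : (1:Fin 4) ≤ 2)
  have hμ23 : μ 3 ≤ μ 2 := hAμ (by decide : (2:Fin 4) ≤ 3)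
  have hν01 : ν 1 ≤ ν 0 := hAν (by decide : (0:Fin 4) ≤ 1)
  have hν12 : ν 2 ≤ ν 1 := hAν (by decide : (1:Fin 4) ≤ 2)
  have hν23 : ν 3 ≤ ν 2 := hAν (by decide : (2:Fin 4) ≤ 3)
  by_cases h0μ : μ 0 = a <;> by_cases h0ν : ν 0 = a
  · rw [stepFun_pos a n μ h0μ, stepFun_pos a n ν h0ν] at hh
    have e0 : (μ 1 - μ 2) + (if n % 2 = 0 then a + 1 - n/2 else a - n/2 - 1)
        + (2 * μ 3 + n % 2) + (μ 2 - μ 3)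
        = (ν 1 - ν 2) + (if n % 2 = 0 then a + 1 - n/2 else a - n/2 - 1)
        + (2 * ν 3 + n % 2) + (ν 2 - ν 3) := congrFun hh 0
    have e2 : (2 * μ 3 + n % 2) + (μ 2 - μ 3) = (2 * ν 3 + n % 2) + (ν 2 - ν 3) :=
      congrFun hh 2
    have e3 : μ 2 - μ 3 = ν 2 - ν 3 := congrFun hh 3
    funext i; fin_cases i
    · show μ 0 = ν 0; omega
    · show μ 1 = ν 1; omega
    · show μ 2 = ν 2; omega
    · show μ 3 = ν 3; omega
  · rw [stepFun_pos a n μ h0μ, stepFun_neg a n ν h0ν] at hh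
    have e0 : (μ 1 - μ 2) + (if n % 2 = 0 then a + 1 - n/2 else a - n/2 - 1)
        + (2 * μ 3 + n % 2) + (μ 2 - μ 3) = ν 0 + 1 := congrFun hh 0
    have e1 : (μ 1 - μ 2) + (if n % 2 = 0 then a + 1 - n/2 else a - n/2 - 1)
        + (2 * μ 3 + n % 2) + (μ 2 - μ 3) = ν 1 := congrFun hh 1
    exact absurd (e0.symm.trans e1) (by omega)
  · rw [stepFun_neg a n μ h0μ, stepFun_pos a n ν h0ν] at hh
    have e0 : μ 0 + 1 = (ν 1 - ν 2) + (if n % 2 = 0 then a + 1 - n/2 else a - n/2 - 1)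
        + (2 * ν 3 + n % 2) + (ν 2 - ν 3) := congrFun hh 0
    have e1 : μ 1 = (ν 1 - ν 2) + (if n % 2 = 0 then a + 1 - n/2 else a - n/2 - 1)
        + (2 * ν 3 + n % 2) + (ν 2 - ν 3) := congrFun hh 1
    exact absurd (e0.trans e1.symm) (by omega)
  · rw [stepFun_neg a n μ h0μ, stepFun_neg a n ν h0ν] at hh
    have e0 : μ 0 + 1 = ν 0 + 1 := congrFun hh 0
    have e1 : μ 1 = ν 1 := congrFun hh 1
    have e2 : μ 2 = ν 2 := congrFun hh 2
    have e3 : μ 3 = ν 3 := congrFun hh 3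
    funext i; fin_cases i
    · show μ 0 = ν 0; omega
    · show μ 1 = ν 1; omega
    · show μ 2 = ν 2; omega
    · show μ 3 = ν 3; omega

/-- `f(a,c) = d_{a,2a-c} - d_{a,2a-c-1} ≥ 0` for all `a ≥ 0` and `0 ≤ c ≤ 2a`. -/
theorem gauss_binomial_coeff_differences_nonneg (a c : ℕ) (hc : c ≤ 2 * a) :
    dZ a (2 * (a : ℤ) - c - 1) ≤ dZ a (2 * (a : ℤ) - c) := by
  unfold dZ gaussCoeff
  rcases Nat.lt_or_ge c (2*a) with h | h
  · rw [if_pos (by omega), if_pos (by omega)]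
    have e1 : (2 * (a:ℤ) - c - 1).toNat = (2*a - c) - 1 := by omega
    have e2 : (2 * (a:ℤ) - c).toNat = 2*a - c := by omega
    rw [e1, e2]
    have e3 : a + 4 - 4 = a := by omega
    rw [e3]
    exact gauss_key a (2*a - c) (by omega) (by omega)
  · rw [if_neg (by omega : ¬ (0:ℤ) ≤ 2 * (a:ℤ) - c - 1)]
    exact Nat.zero_le _
end

section
/- Let d_{a,i} denote the coefficient of q^i in the Gaussian binomial coefficient (a+4 choose 4)_q. Then for every a ≥ 2, the coefficients in degrees 2a-1 and 2a-2 are equal: d_{a,2a-1} = d_{a,2a-2}. -/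
lemma antitone_fin_four_iff {α : Type*} [Preorder α] {μ : Fin 4 → α} :
    Antitone μ ↔ μ 1 ≤ μ 0 ∧ μ 2 ≤ μ 1 ∧ μ 3 ≤ μ 2 := by
  simp [Fin.antitone_iff_succ_le, Fin.forall_fin_succ]

def IsDiffCoord (a n : ℕ) : ℕ × ℕ × ℕ × ℕ → Prop
  | (e, b, c, d) => e + 2 * b + 3 * c + 4 * d = n ∧ e + b + c + d ≤ a

abbrev DiffCoords (a n : ℕ) : Type := {v : ℕ × ℕ × ℕ × ℕ // IsDiffCoord a n v}

def boxPartitionEquivDiffCoords (a n : ℕ) :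
    {μ : Fin 4 → ℕ // Antitone μ ∧ (∀ i, μ i ≤ a) ∧ ∑ i, μ i = n} ≃ DiffCoords a n where
  toFun μ := ⟨(μ.1 0 - μ.1 1, μ.1 1 - μ.1 2, μ.1 2 - μ.1 3, μ.1 3), by
    obtain ⟨μ, hμ, hle, hsum⟩ := μ
    obtain ⟨h01, h12, h23⟩ := antitone_fin_four_iff.mp hμ
    have h0 := hle 0
    rw [Fin.sum_univ_four] at hsum
    constructor <;> dsimp only <;> omega⟩
  invFun v := ⟨![v.1.1 + v.1.2.1 + v.1.2.2.1 + v.1.2.2.2, v.1.2.1 + v.1.2.2.1 + v.1.2.2.2,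
      v.1.2.2.1 + v.1.2.2.2, v.1.2.2.2], by
    obtain ⟨⟨e, b, c, d⟩, hs, hl⟩ := v
    have hμ : Antitone ![e + b + c + d, b + c + d, c + d, d] := antitone_fin_four_iff.mpr (by simp)
    refine ⟨hμ, fun i => (hμ (Fin.zero_le i)).trans hl, ?_⟩
    rw [Fin.sum_univ_four]
    change (e + b + c + d) + (b + c + d) + (c + d) + d = n
    omega⟩
  left_inv := by
    rintro ⟨μ, hμ, -, -⟩
    obtain ⟨h01, h12, h23⟩ := antitone_fin_four_iff.mp hμ
    ext i
    fin_cases i <;> dsimp <;> omega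
  right_inv := by
    rintro ⟨⟨e, b, c, d⟩, -⟩
    ext <;> simp [add_assoc]

def flatStep : ℕ × ℕ × ℕ × ℕ → ℕ × ℕ × ℕ × ℕ
  | (e, b, c, d) => if e = 0 then (c + d + 1, b, d, c / 2) else (e - 1, b, c, d)

def flatStepInv (a : ℕ) : ℕ × ℕ × ℕ × ℕ → ℕ × ℕ × ℕ × ℕ
  | (e, b, c, d) => if e + b + c + d = a then (0, b, 2 * d + 1, c) else (e + 1, b, c, d)

def flatStepEquiv (a : ℕ) : DiffCoords (a + 1) (2 * a + 1) ≃ DiffCoords (a + 1) (2 * a) where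
  toFun v := ⟨flatStep v.1, by
    obtain ⟨⟨e, b, c, d⟩, hs, hl⟩ := v
    simp only [flatStep]
    split_ifs <;> constructor <;> omega⟩
  invFun v := ⟨flatStepInv (a + 1) v.1, by
    obtain ⟨⟨e, b, c, d⟩, hs, hl⟩ := v
    simp only [flatStepInv]
    split_ifs <;> constructor <;> omega⟩
  left_inv := by
    rintro ⟨⟨e, b, c, d⟩, hs, hl⟩
    ext1
    simp only [flatStep, flatStepInv]
    split_ifs <;> simp only [Prod.mk.injEq, and_true, true_and] at * <;> omega
  right_inv := by
    rintro ⟨⟨e, b, c, d⟩, hs, hl⟩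
    ext1
    simp only [flatStep, flatStepInv]
    split_ifs <;> simp only [Prod.mk.injEq, and_true, true_and, not_true_eq_false] at * <;> omega

lemma gaussCoeff_four_eq_card (a n : ℕ) :
    gaussCoeff (a + 4) 4 n = Nat.card (DiffCoords a n) := by
  rw [gaussCoeff, Gcoeff, Nat.add_sub_cancel]
  exact Nat.card_congr (boxPartitionEquivDiffCoords a n)

theorem gauss_binomial_flat_step_general (a : ℕ) :
    gaussCoeff (a + 4) 4 (2 * a - 1) = gaussCoeff (a + 4) 4 (2 * a - 2) := by
  obtain _ | a := a
  · rfl -- both degrees truncate to `0`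
  · have hodd : 2 * (a + 1) - 1 = 2 * a + 1 := by omega
    have heven : 2 * (a + 1) - 2 = 2 * a := by omega
    rw [hodd, heven, gaussCoeff_four_eq_card, gaussCoeff_four_eq_card]
    exact Nat.card_congr (flatStepEquiv a)

/-- For `a ≥ 2`, the coefficients of `(a+4 choose 4)_q` in degrees `2a-1` and `2a-2`
are equal. -/
theorem gauss_binomial_flat_step (a : ℕ) (ha : 2 ≤ a) :
    gaussCoeff (a + 4) 4 (2 * a - 1) = gaussCoeff (a + 4) 4 (2 * a - 2) :=
  gauss_binomial_flat_step_general a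
end

section
/- Let d_{a,i} denote the coefficient of q^i in the Gaussian binomial coefficient (a+4 choose 4)_q, and let f(a,0) = d_{a,2a} - d_{a,2a-1}. Then f(a,0) = ⌊(a + 3δ)/6⌋, where δ = 1 if a is odd and δ = 2 if a is even. In particular, f(a,0) → ∞ as a → ∞. -/
/-!
Coding a partition `μ₀ ≥ μ₁ ≥ μ₂ ≥ μ₃` in the `4 × a` box by `(μ₁ - μ₂, μ₂ - μ₃, μ₃)` turns
`d_{a,k}` into the number of lattice points `(x, y, z)` of a polytope. For `k = 2a` and `k = 2a - 1`
the two point sets differ only in the points on the faces `2x + 3y + 4z = 2a` and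
`x + 2y + 3z = a - 1` respectively, which correspond to the partitions of `a`, resp. `a - 1`, into
parts `1, 2, 3`. Adding a part `1` embeds the latter into the former, with complement the
partitions of `a` into parts `2, 3`; there are `⌊(a + 3δ)/6⌋` of those, since their number grows
by one when `a` grows by `6`.
-/

open Finset

namespace GaussFour

def cube (a : ℕ) : Finset (ℕ × ℕ × ℕ) :=
  Iic a ×ˢ Iic a ×ˢ Iic a

@[simp]
lemma mem_cube {a : ℕ} {p : ℕ × ℕ × ℕ} :
    p ∈ cube a ↔ p.1 ≤ a ∧ p.2.1 ≤ a ∧ p.2.2 ≤ a := by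
  simp [cube]

/-- A partition `μ₀ ≥ μ₁ ≥ μ₂ ≥ μ₃` of `k` inside the `4 × a` box is coded by its successive
differences `(x, y, z) = (μ₁ - μ₂, μ₂ - μ₃, μ₃)`; then `μ₀ = k - (x + 2y + 3z)`, and the constraints
`μ₁ ≤ μ₀ ≤ a` become the two inequalities below. -/
def diffTriples (a k : ℕ) : Finset (ℕ × ℕ × ℕ) :=
  (cube a).filter fun p => 2 * p.1 + 3 * p.2.1 + 4 * p.2.2 ≤ k ∧ k ≤ p.1 + 2 * p.2.1 + 3 * p.2.2 + a

/-- Partitions of `n` into parts `1, 2, 3`, coded by the multiplicities `(x, y, z)` of the parts. -/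
def partitions123 (n : ℕ) : Finset (ℕ × ℕ × ℕ) :=
  (cube n).filter fun p => p.1 + 2 * p.2.1 + 3 * p.2.2 = n

/-- Partitions of `n` into parts `2, 3`, coded by the multiplicities `(y, z)` of the parts. -/
def partitions23 (n : ℕ) : Finset (ℕ × ℕ) :=
  (Iic n ×ˢ Iic n).filter fun p => 2 * p.1 + 3 * p.2 = n

lemma Gcoeff_four_eq_card_diffTriples (a k : ℕ) :
    Gcoeff (fun _ : Fin 4 => a) k = #(diffTriples a k) := by
  rw [Gcoeff, ← Nat.card_eq_finsetCard]
  refine Nat.card_congr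
    { toFun := fun μ => ⟨(μ.1 1 - μ.1 2, μ.1 2 - μ.1 3, μ.1 3), ?_⟩
      invFun := fun p => ⟨![k - (p.1.1 + 2 * p.1.2.1 + 3 * p.1.2.2),
        p.1.1 + p.1.2.1 + p.1.2.2, p.1.2.1 + p.1.2.2, p.1.2.2], ?_⟩
      left_inv := ?_
      right_inv := ?_ }
  · obtain ⟨μ, hμ, hle, hsum⟩ := μ
    have := hμ (show (0 : Fin 4) ≤ 1 by decide)
    have := hμ (show (1 : Fin 4) ≤ 2 by decide)
    have := hμ (show (2 : Fin 4) ≤ 3 by decide)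
    have := hle 0
    rw [Fin.sum_univ_four] at hsum
    simp only [diffTriples, mem_filter, mem_cube]
    omega
  · obtain ⟨⟨x, y, z⟩, hp⟩ := p
    simp only [diffTriples, mem_filter, mem_cube] at hp
    refine ⟨fun i j hij => ?_, fun i => ?_, ?_⟩
    · fin_cases i <;> fin_cases j <;> simp_all [Fin.le_def] <;> omega
    · fin_cases i <;> simp <;> omega
    · simp [Fin.sum_univ_four]
      omega
  · rintro ⟨μ, hμ, -, hsum⟩
    have := hμ (show (0 : Fin 4) ≤ 1 by decide)
    have := hμ (show (1 : Fin 4) ≤ 2 by decide)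
    have := hμ (show (2 : Fin 4) ≤ 3 by decide)
    rw [Fin.sum_univ_four] at hsum
    ext i
    fin_cases i <;> simp <;> omega
  · rintro ⟨⟨x, y, z⟩, hp⟩
    simp only [diffTriples, mem_filter, mem_cube] at hp
    ext <;> simp
    omega

lemma dZ_natCast (a k : ℕ) : dZ a k = #(diffTriples a k) := by
  simp [dZ, gaussCoeff, Gcoeff_four_eq_card_diffTriples]

lemma card_diffTriples_succ_double (n : ℕ) :
    #(diffTriples (n + 1) (2 * n + 2)) =
      #(diffTriples (n + 1) (2 * n + 2) ∩ diffTriples (n + 1) (2 * n + 1)) +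
        #(partitions123 (n + 1)) := by
  rw [← card_filter_add_card_filter_not (s := diffTriples (n + 1) (2 * n + 2))
    (fun p => 2 * p.1 + 3 * p.2.1 + 4 * p.2.2 ≠ 2 * n + 2)]
  congr 1
  · congr 1
    ext ⟨x, y, z⟩
    simp only [diffTriples, mem_filter, mem_inter, mem_cube]
    omega
  · -- `2x + 3y + 4z = 2(n + 1)` forces `y` to be even
    apply card_nbij' (fun p => (p.1, p.2.2, p.2.1 / 2)) (fun p => (p.1, 2 * p.2.2, p.2.1))
    · rintro ⟨x, y, z⟩ hp
      simp only [diffTriples, partitions123, mem_coe, mem_filter, mem_cube] at hp ⊢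
      omega
    · rintro ⟨x, y, z⟩ hp
      simp only [diffTriples, partitions123, mem_coe, mem_filter, mem_cube] at hp ⊢
      omega
    · rintro ⟨x, y, z⟩ hp
      simp only [diffTriples, mem_coe, mem_filter, mem_cube, ne_eq, not_not] at hp
      simp only [Prod.mk.injEq, true_and, and_true]
      omega
    · rintro ⟨x, y, z⟩ -
      simp

lemma card_diffTriples_succ_double_sub_one (n : ℕ) :
    #(diffTriples (n + 1) (2 * n + 1)) =
      #(diffTriples (n + 1) (2 * n + 2) ∩ diffTriples (n + 1) (2 * n + 1)) +
        #(partitions123 n) := by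
  rw [← card_filter_add_card_filter_not (s := diffTriples (n + 1) (2 * n + 1))
    (fun p => p.1 + 2 * p.2.1 + 3 * p.2.2 ≠ n)]
  congr 2 <;> ext ⟨x, y, z⟩ <;>
    simp only [diffTriples, partitions123, mem_filter, mem_inter, mem_cube] <;> omega

lemma card_partitions123_succ (n : ℕ) :
    #(partitions123 (n + 1)) = #(partitions123 n) + #(partitions23 (n + 1)) := by
  rw [← card_filter_add_card_filter_not (s := partitions123 (n + 1)) (fun p => p.1 ≠ 0)]
  congr 1
  · apply card_nbij' (fun p => (p.1 - 1, p.2)) (fun p => (p.1 + 1, p.2))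
    · rintro ⟨x, y, z⟩ hp
      simp only [partitions123, mem_coe, mem_filter, mem_cube] at hp ⊢
      omega
    · rintro ⟨x, y, z⟩ hp
      simp only [partitions123, mem_coe, mem_filter, mem_cube] at hp ⊢
      omega
    · rintro ⟨x, y, z⟩ hp
      simp only [mem_coe, mem_filter] at hp
      simp only [Prod.mk.injEq, and_true]
      omega
    · rintro ⟨x, y, z⟩ -
      simp
  · apply card_nbij' (fun p => p.2) (fun p => (0, p))
    · rintro ⟨x, y, z⟩ hp
      simp only [partitions123, partitions23, mem_coe, mem_filter, mem_cube,
        mem_product, mem_Iic] at hp ⊢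
      omega
    · rintro ⟨y, z⟩ hp
      simp only [partitions123, partitions23, mem_coe, mem_filter, mem_cube,
        mem_product, mem_Iic] at hp ⊢
      omega
    · rintro ⟨x, y, z⟩ hp
      simp only [mem_coe, mem_filter, not_not] at hp
      simp [hp.2]
    · rintro ⟨y, z⟩ -
      rfl

lemma card_partitions23_add_six (n : ℕ) :
    #(partitions23 (n + 6)) = #(partitions23 n) + 1 := by
  rw [← card_filter_add_card_filter_not (s := partitions23 (n + 6)) (fun p => 2 ≤ p.2)]
  congr 1
  · apply card_nbij' (fun p => (p.1, p.2 - 2)) (fun p => (p.1, p.2 + 2))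
    · rintro ⟨y, z⟩ hp
      simp only [partitions23, mem_coe, mem_filter, mem_product, mem_Iic] at hp ⊢
      omega
    · rintro ⟨y, z⟩ hp
      simp only [partitions23, mem_coe, mem_filter, mem_product, mem_Iic] at hp ⊢
      omega
    · rintro ⟨y, z⟩ hp
      simp only [mem_coe, mem_filter] at hp
      simp only [Prod.mk.injEq, true_and]
      omega
    · rintro ⟨y, z⟩ -
      simp
  · -- the only partition of `n + 6` into parts `2, 3` with at most one part `3`
    rw [card_eq_one]
    refine ⟨if n % 2 = 0 then ((n + 6) / 2, 0) else ((n + 3) / 2, 1), ?_⟩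
    ext ⟨y, z⟩
    simp only [partitions23, mem_filter, mem_product, mem_Iic, mem_singleton]
    split_ifs <;> simp only [Prod.mk.injEq] <;> omega

lemma card_partitions23 (n : ℕ) :
    #(partitions23 n) = (n + 3 * (if n % 2 = 1 then 1 else 2)) / 6 := by
  induction n using Nat.strong_induction_on with
  | _ n ih =>
    by_cases h : n < 6
    · interval_cases n <;> decide
    · obtain ⟨m, rfl⟩ : ∃ m, n = m + 6 := ⟨n - 6, by omega⟩
      rw [card_partitions23_add_six, ih m (by omega)]
      split_ifs <;> omega

lemma dZ_double_sub_dZ_double_sub_one (a : ℕ) :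
    (dZ a (2 * (a : ℤ)) : ℤ) - dZ a (2 * (a : ℤ) - 1) = #(partitions23 a) := by
  cases a with
  | zero =>
    simp only [dZ, gaussCoeff, Gcoeff_four_eq_card_diffTriples]
    decide
  | succ n =>
    have h_top : 2 * ((n + 1 : ℕ) : ℤ) = ((2 * n + 2 : ℕ) : ℤ) := by push_cast; ring
    have h_below : 2 * ((n + 1 : ℕ) : ℤ) - 1 = ((2 * n + 1 : ℕ) : ℤ) := by push_cast; ring
    rw [h_below, h_top, dZ_natCast, dZ_natCast, card_diffTriples_succ_double,
      card_diffTriples_succ_double_sub_one, card_partitions123_succ]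
    push_cast
    ring

end GaussFour

/-- `f(a,0) = ⌊(a + 3δ)/6⌋` with `δ = 1` for `a` odd and `δ = 2` for `a` even;
in particular `f(a,0) → ∞` as `a → ∞`. -/
theorem top_difference_formula :
    (∀ a : ℕ, (dZ a (2 * (a : ℤ)) : ℤ) - dZ a (2 * (a : ℤ) - 1) =
      ((a : ℤ) + 3 * (if a % 2 = 1 then 1 else 2)) / 6) ∧
    Filter.Tendsto (fun a : ℕ => (dZ a (2 * (a : ℤ)) : ℤ) - dZ a (2 * (a : ℤ) - 1))
      Filter.atTop Filter.atTop := by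
  have formula : ∀ a : ℕ, (dZ a (2 * (a : ℤ)) : ℤ) - dZ a (2 * (a : ℤ) - 1) =
      ((a : ℤ) + 3 * (if a % 2 = 1 then 1 else 2)) / 6 := fun a => by
    rw [GaussFour.dZ_double_sub_dZ_double_sub_one, GaussFour.card_partitions23]
    push_cast
    rfl
  refine ⟨formula, Filter.tendsto_atTop_atTop.2 fun b => ⟨6 * b.toNat, fun a ha => ?_⟩⟩
  rw [formula]
  split_ifs <;> omega
end

section
/- Let d_{a,i} denote the coefficient of q^i in the Gaussian binomial coefficient (a+4 choose 4)_q, and for c ≥ 0 define f(a,c) = d_{a,2a-c} - d_{a,2a-c-1}. Then the double generating function identity holds: Σ_{a,c ≥ 0} f(a,c) q^a t^c = 1/((1-q^2)(1-q^3)(1-q t^2)) + q^2 t^2 /((1-q^2)(1-q^3)(1-q t^2)(1-q t)). -/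
/-!
Splitting off the first row, a partition in the `4 × (a + 1)` box either lies in the `4 × a` box or
has first part `a + 1` and, below it, a partition into at most three parts; for sizes up to
`2a + 2` the bound `a + 1` on those parts is automatic. Hence `d_{a+1,i} = d_{a,i} + p₃(i - a - 1)`
for `i ≤ 2a + 2`, with `p₃` the count of partitions into at most three parts, and therefore
`f(a + 1, c) = f(a, c - 2) + e(a + 1 - c)` for `c ≥ 0`, where `∑ e(m) q^m = 1 / ((1 - q²)(1 - q³))`.
The symmetry `d_{a,i} = d_{a,4a-i}` gives `f(a, -c - 1) = -f(a, c)`, which closes an induction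
showing `f(a, 0) = e(a)` and `f(a, 1) = 0`. Thus
`F (1 - qt²) = ∑_{c ≠ 1} (qt)^c / ((1 - q²)(1 - q³))`, and multiplying by `(1 - q²)(1 - q³)(1 - qt)`
leaves `1 - qt + q²t²`.
-/

open Finset

section Partitions

variable {n a k : ℕ}

open scoped Classical in
-- A partition of `k` into at most `n` parts is an antitone `n`-tuple padded with zeros.
noncomputable def partitionsAtMost (n k : ℕ) : Finset (Fin n → ℕ) :=
  {μ ∈ Nat.antidiagonalTuple n k | Antitone μ}

noncomputable def boxPartitions (n a k : ℕ) : Finset (Fin n → ℕ) :=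
  {μ ∈ partitionsAtMost n k | ∀ i, μ i ≤ a}

theorem mem_partitionsAtMost {μ : Fin n → ℕ} :
    μ ∈ partitionsAtMost n k ↔ Antitone μ ∧ ∑ i, μ i = k := by
  simp [partitionsAtMost, Nat.mem_antidiagonalTuple, and_comm]

theorem mem_boxPartitions {μ : Fin n → ℕ} :
    μ ∈ boxPartitions n a k ↔ Antitone μ ∧ ∑ i, μ i = k ∧ ∀ i, μ i ≤ a := by
  simp [boxPartitions, mem_partitionsAtMost, and_assoc]

theorem Gcoeff_const_eq_card (n a k : ℕ) :
    Gcoeff (fun _ : Fin n => a) k = #(boxPartitions n a k) := by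
  rw [Gcoeff, ← Nat.card_eq_finsetCard]
  exact Nat.card_congr <| Equiv.subtypeEquivRight fun μ => by rw [mem_boxPartitions]; tauto

theorem antitone_cons {α : Type*} [Preorder α] {x : α} {ν : Fin n → α} (hν : Antitone ν)
    (hx : ∀ i, ν i ≤ x) : Antitone (Fin.cons x ν : Fin (n + 1) → α) := by
  intro i j hij
  induction j using Fin.cases with
  | zero => rw [nonpos_iff_eq_zero.mp hij]
  | succ j =>
    induction i using Fin.cases with
    | zero => simpa using hx j
    | succ i => simpa using hν (Fin.succ_le_succ_iff.mp hij)

theorem antitone_snoc {α : Type*} [Preorder α] {x : α} {ν : Fin n → α} (hν : Antitone ν)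
    (hx : ∀ i, x ≤ ν i) : Antitone (Fin.snoc ν x : Fin (n + 1) → α) := by
  intro i j hij
  induction j using Fin.lastCases with
  | last =>
    induction i using Fin.lastCases with
    | last => exact le_rfl
    | cast i => simpa using hx i
  | cast j =>
    induction i using Fin.lastCases with
    | last => exact absurd hij (not_le.mpr (Fin.castSucc_lt_last j))
    | cast i => simpa using hν (Fin.castSucc_le_castSucc_iff.mp hij)

theorem le_sum_of_mem_partitionsAtMost {μ : Fin n → ℕ} (hμ : μ ∈ partitionsAtMost n k) (i : Fin n) :
    μ i ≤ k :=
  (mem_partitionsAtMost.mp hμ).2 ▸ single_le_sum (fun j _ => Nat.zero_le (μ j)) (mem_univ i)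

theorem boxPartitions_of_le (h : k ≤ a) : boxPartitions n a k = partitionsAtMost n k :=
  filter_true_of_mem fun _ hμ i => (le_sum_of_mem_partitionsAtMost hμ i).trans h

theorem boxPartitions_eq_empty (h : n * a < k) : boxPartitions n a k = ∅ := by
  refine eq_empty_of_forall_notMem fun μ hμ => h.not_ge ?_
  obtain ⟨-, hsum, hle⟩ := mem_boxPartitions.mp hμ
  simpa [← hsum] using sum_le_sum fun i (_ : i ∈ univ) => hle i

theorem compl_mem_boxPartitions {μ : Fin n → ℕ} (hμ : μ ∈ boxPartitions n a k) :
    (fun i => a - μ i.rev) ∈ boxPartitions n a (n * a - k) := by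
  obtain ⟨hanti, hsum, hle⟩ := mem_boxPartitions.mp hμ
  have hanti' : Antitone fun i : Fin n => a - μ i.rev :=
    fun i j hij => Nat.sub_le_sub_left (hanti (Fin.rev_le_rev.mpr hij)) a
  refine mem_boxPartitions.mpr ⟨hanti', ?_, fun i => Nat.sub_le a _⟩
  have hcompl : ∑ i : Fin n, (a - μ i.rev) + ∑ i : Fin n, μ i.rev = n * a := by
    simp [← sum_add_distrib, Nat.sub_add_cancel (hle _)]
  have hrev : ∑ i : Fin n, μ i.rev = k := hsum ▸ Equiv.sum_comp Fin.revPerm μ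
  omega

theorem card_boxPartitions_compl (h : k ≤ n * a) :
    #(boxPartitions n a (n * a - k)) = #(boxPartitions n a k) := by
  have hk : n * a - (n * a - k) = k := Nat.sub_sub_self h
  refine card_nbij' (fun μ (i : Fin n) => a - μ i.rev) (fun μ i => a - μ i.rev) (fun μ hμ => ?_)
    (fun μ hμ => compl_mem_boxPartitions hμ) (fun μ hμ => ?_) (fun μ hμ => ?_)
  · simpa [hk] using compl_mem_boxPartitions hμ
  all_goals
    funext i
    simpa using Nat.sub_sub_self ((mem_boxPartitions.mp hμ).2.2 i)

theorem filter_boxPartitions_le :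
    {μ ∈ boxPartitions (n + 1) (a + 1) k | μ 0 ≤ a} = boxPartitions (n + 1) a k := by
  ext μ
  simp only [mem_filter, mem_boxPartitions]
  constructor
  · rintro ⟨⟨hanti, hsum, -⟩, h0⟩
    exact ⟨hanti, hsum, fun i => (hanti (Fin.zero_le i)).trans h0⟩
  · rintro ⟨hanti, hsum, hle⟩
    exact ⟨⟨hanti, hsum, fun i => (hle i).trans a.le_succ⟩, hle 0⟩

theorem card_filter_boxPartitions_top (j : ℕ) :
    #{μ ∈ boxPartitions (n + 1) (a + 1) (j + (a + 1)) | ¬ μ 0 ≤ a} =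
      #(boxPartitions n (a + 1) j) := by
  have top_eq {μ : Fin (n + 1) → ℕ} (hμ : μ ∈ boxPartitions (n + 1) (a + 1) (j + (a + 1)))
      (h0 : ¬ μ 0 ≤ a) : μ 0 = a + 1 := by
    have := (mem_boxPartitions.mp hμ).2.2 0
    omega
  refine card_nbij' Fin.tail (fun ν => Fin.cons (a + 1) ν) (fun μ hμ => ?_) (fun ν hν => ?_)
    (fun μ hμ => ?_) (fun ν _ => Fin.tail_cons _ _)
  · obtain ⟨hμ, h0⟩ := mem_filter.mp hμ
    obtain ⟨hanti, hsum, hle⟩ := mem_boxPartitions.mp hμ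
    rw [Fin.sum_univ_succ, top_eq hμ h0] at hsum
    exact mem_boxPartitions.mpr ⟨hanti.comp_monotone Fin.strictMono_succ.monotone,
      by simp only [Fin.tail]; omega, fun i => hle _⟩
  · obtain ⟨hanti, hsum, hle⟩ := mem_boxPartitions.mp hν
    refine mem_filter.mpr ⟨mem_boxPartitions.mpr ⟨antitone_cons hanti hle, ?_, ?_⟩, by simp⟩
    · simp [Fin.sum_univ_succ, hsum, add_comm]
    · intro i
      induction i using Fin.cases with
      | zero => simp
      | succ i => simpa using hle i
  · obtain ⟨hμ, h0⟩ := mem_filter.mp hμ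
    simp only
    rw [← top_eq hμ h0, Fin.cons_self_tail]

theorem filter_boxPartitions_top_eq_empty (hk : k < a + 1) :
    {μ ∈ boxPartitions (n + 1) (a + 1) k | ¬ μ 0 ≤ a} = ∅ :=
  filter_false_of_mem fun _ hμ => not_not_intro
    (Nat.le_of_lt_succ ((le_sum_of_mem_partitionsAtMost (mem_filter.mp hμ).1 0).trans_lt hk))

theorem card_filter_partitionsAtMost_last_eq_zero :
    #{μ ∈ partitionsAtMost (n + 1) k | μ (Fin.last n) = 0} = #(partitionsAtMost n k) := by
  refine card_nbij' Fin.init (fun ν => Fin.snoc ν 0) (fun μ hμ => ?_) (fun ν hν => ?_)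
    (fun μ hμ => ?_) (fun ν _ => Fin.init_snoc _ _)
  · obtain ⟨hμ, hlast⟩ := mem_filter.mp hμ
    obtain ⟨hanti, hsum⟩ := mem_partitionsAtMost.mp hμ
    rw [Fin.sum_univ_castSucc, hlast, add_zero] at hsum
    exact mem_partitionsAtMost.mpr ⟨hanti.comp_monotone Fin.strictMono_castSucc.monotone, hsum⟩
  · obtain ⟨hanti, hsum⟩ := mem_partitionsAtMost.mp hν
    exact mem_filter.mpr ⟨mem_partitionsAtMost.mpr ⟨antitone_snoc hanti fun _ => Nat.zero_le _,
      by simp [Fin.sum_univ_castSucc, hsum]⟩, by simp⟩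
  · have hlast := (mem_filter.mp hμ).2
    simp only
    rw [← hlast, Fin.snoc_init_self]

theorem one_le_of_last_ne_zero {μ : Fin (n + 1) → ℕ} (hanti : Antitone μ)
    (hlast : μ (Fin.last n) ≠ 0) (i : Fin (n + 1)) : 1 ≤ μ i :=
  (Nat.one_le_iff_ne_zero.mpr hlast).trans (hanti (Fin.le_last i))

theorem card_filter_partitionsAtMost_last_ne_zero (j : ℕ) :
    #{μ ∈ partitionsAtMost (n + 1) (j + (n + 1)) | μ (Fin.last n) ≠ 0} =
      #(partitionsAtMost (n + 1) j) := by
  refine card_nbij' (fun μ i => μ i - 1) (fun ν i => ν i + 1) (fun μ hμ => ?_) (fun ν hν => ?_)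
    (fun μ hμ => ?_) (fun ν _ => by simp)
  · obtain ⟨hμ, hlast⟩ := mem_filter.mp hμ
    obtain ⟨hanti, hsum⟩ := mem_partitionsAtMost.mp hμ
    have hpos := one_le_of_last_ne_zero hanti hlast
    refine mem_partitionsAtMost.mpr ⟨fun i i' h => Nat.sub_le_sub_right (hanti h) 1, ?_⟩
    have : ∑ i, (μ i - 1) + (n + 1) = ∑ i, μ i := by
      rw [← sum_congr rfl fun i _ => Nat.sub_add_cancel (hpos i)]
      simp [sum_add_distrib]
    change ∑ i, (μ i - 1) = j
    omega
  · obtain ⟨hanti, hsum⟩ := mem_partitionsAtMost.mp hν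
    exact mem_filter.mpr ⟨mem_partitionsAtMost.mpr ⟨fun i i' h => Nat.add_le_add_right (hanti h) 1,
      by simp [sum_add_distrib, hsum]⟩, by simp⟩
  · obtain ⟨hμ, hlast⟩ := mem_filter.mp hμ
    funext i
    exact Nat.sub_add_cancel (one_le_of_last_ne_zero (mem_partitionsAtMost.mp hμ).1 hlast i)

theorem filter_partitionsAtMost_last_ne_zero_eq_empty (hk : k < n + 1) :
    {μ ∈ partitionsAtMost (n + 1) k | μ (Fin.last n) ≠ 0} = ∅ := by
  refine filter_false_of_mem fun μ hμ hlast => hk.not_ge ?_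
  obtain ⟨hanti, hsum⟩ := mem_partitionsAtMost.mp hμ
  simpa [← hsum] using sum_le_sum fun i (_ : i ∈ univ) => one_le_of_last_ne_zero hanti hlast i

noncomputable def partCount (n : ℕ) (k : ℤ) : ℤ :=
  if 0 ≤ k then #(partitionsAtMost n k.toNat) else 0

noncomputable def boxCount (n a : ℕ) (k : ℤ) : ℤ :=
  if 0 ≤ k then #(boxPartitions n a k.toNat) else 0

@[simp] theorem partCount_natCast (n k : ℕ) : partCount n k = #(partitionsAtMost n k) := by
  simp [partCount]

theorem partCount_of_neg {k : ℤ} (hk : k < 0) : partCount n k = 0 := if_neg hk.not_ge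

@[simp] theorem boxCount_natCast (n a k : ℕ) : boxCount n a k = #(boxPartitions n a k) := by
  simp [boxCount]

theorem boxCount_of_neg {k : ℤ} (hk : k < 0) : boxCount n a k = 0 := if_neg hk.not_ge

theorem partCount_zero_left (k : ℤ) : partCount 0 k = if k = 0 then 1 else 0 := by
  rcases lt_or_ge k 0 with hk | hk
  · rw [partCount_of_neg hk, if_neg hk.ne]
  obtain ⟨k, rfl⟩ := Int.eq_ofNat_of_zero_le hk
  rw [partCount_natCast]
  cases k with
  | zero => simp [partitionsAtMost, Nat.antidiagonalTuple_zero_zero, Subsingleton.antitone]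
  | succ k => simp [partitionsAtMost, Nat.antidiagonalTuple_zero_succ]; omega

theorem partCount_succ (n : ℕ) (k : ℤ) :
    partCount (n + 1) k = partCount n k + partCount (n + 1) (k - (n + 1)) := by
  rcases lt_or_ge k 0 with hk | hk
  · simp [partCount_of_neg, hk, show k - (n + 1) < 0 by omega]
  obtain ⟨k, rfl⟩ := Int.eq_ofNat_of_zero_le hk
  rw [partCount_natCast, partCount_natCast,
    ← card_filter_add_card_filter_not (fun μ : Fin (n + 1) → ℕ => μ (Fin.last n) = 0),
    card_filter_partitionsAtMost_last_eq_zero, Nat.cast_add, add_right_inj]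
  rcases lt_or_ge k (n + 1) with hlt | hge
  · rw [filter_partitionsAtMost_last_ne_zero_eq_empty hlt, partCount_of_neg (by omega)]
    rfl
  · obtain ⟨j, rfl⟩ := Nat.exists_eq_add_of_le' hge
    rw [card_filter_partitionsAtMost_last_ne_zero]
    simp

theorem partCount_zero_right (n : ℕ) : partCount n 0 = 1 := by
  induction n with
  | zero => simp [partCount_zero_left]
  | succ n ih => rw [partCount_succ, ih, partCount_of_neg (by omega), add_zero]

theorem boxCount_succ_succ (n a : ℕ) (k : ℤ) :
    boxCount (n + 1) (a + 1) k = boxCount (n + 1) a k + boxCount n (a + 1) (k - (a + 1)) := by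
  rcases lt_or_ge k 0 with hk | hk
  · simp [boxCount_of_neg, hk, show k - (a + 1) < 0 by omega]
  obtain ⟨k, rfl⟩ := Int.eq_ofNat_of_zero_le hk
  rw [boxCount_natCast, boxCount_natCast,
    ← card_filter_add_card_filter_not (fun μ : Fin (n + 1) → ℕ => μ 0 ≤ a),
    filter_boxPartitions_le, Nat.cast_add, add_right_inj]
  rcases lt_or_ge k (a + 1) with hlt | hge
  · rw [filter_boxPartitions_top_eq_empty hlt, boxCount_of_neg (by omega)]
    rfl
  · obtain ⟨j, rfl⟩ := Nat.exists_eq_add_of_le' hge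
    rw [card_filter_boxPartitions_top]
    simp

theorem boxCount_compl (n a : ℕ) (k : ℤ) : boxCount n a (n * a - k) = boxCount n a k := by
  rcases lt_or_ge k 0 with hk | hk
  · have hna : (0 : ℤ) ≤ n * a := by positivity
    obtain ⟨m, hm⟩ := Int.eq_ofNat_of_zero_le (show 0 ≤ (n : ℤ) * a - k by omega)
    rw [boxCount_of_neg hk, hm, boxCount_natCast, boxPartitions_eq_empty (by omega)]
    rfl
  obtain ⟨k, rfl⟩ := Int.eq_ofNat_of_zero_le hk
  rcases lt_or_ge (n * a) k with hlt | hle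
  · rw [boxCount_of_neg (by omega), boxCount_natCast, boxPartitions_eq_empty hlt]
    rfl
  · rw [← Nat.cast_mul, ← Nat.cast_sub hle, boxCount_natCast, boxCount_natCast,
      card_boxPartitions_compl hle]

theorem boxCount_of_le {k : ℤ} (h : k ≤ a) : boxCount n a k = partCount n k := by
  rcases lt_or_ge k 0 with hk | hk
  · rw [boxCount_of_neg hk, partCount_of_neg hk]
  obtain ⟨k, rfl⟩ := Int.eq_ofNat_of_zero_le hk
  rw [boxCount_natCast, partCount_natCast, boxPartitions_of_le (by omega)]

theorem boxCount_zero_right (n : ℕ) (k : ℤ) : boxCount n 0 k = if k = 0 then 1 else 0 := by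
  rcases le_or_gt k 0 with hk | hk
  · rw [boxCount_of_le (by simpa using hk)]
    rcases hk.lt_or_eq with hk | rfl
    · rw [partCount_of_neg hk, if_neg hk.ne]
    · rw [partCount_zero_right, if_pos rfl]
  · rw [← boxCount_compl, boxCount_of_neg (by simpa using hk), if_neg hk.ne']

end Partitions

-- The coefficient of `q ^ m` in `(1 - q) / ((1 - q) (1 - q²) (1 - q³)) = 1 / ((1 - q²) (1 - q³))`.
noncomputable def twoThreeCount (m : ℤ) : ℤ := partCount 3 m - partCount 3 (m - 1)

theorem twoThreeCount_of_neg {m : ℤ} (hm : m < 0) : twoThreeCount m = 0 := by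
  rw [twoThreeCount, partCount_of_neg hm, partCount_of_neg (by omega), sub_zero]

theorem twoThreeCount_zero : twoThreeCount 0 = 1 := by
  rw [twoThreeCount, partCount_zero_right, partCount_of_neg (by omega), sub_zero]

theorem twoThreeCount_recurrence (m : ℤ) :
    twoThreeCount m - twoThreeCount (m - 2) - twoThreeCount (m - 3) + twoThreeCount (m - 5) =
      if m = 0 then 1 else 0 := by
  have h1 (k : ℤ) : partCount 1 k = partCount 0 k + partCount 1 (k - 1) := by
    simpa using partCount_succ 0 k
  have h2 (k : ℤ) : partCount 2 k = partCount 1 k + partCount 2 (k - 2) := by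
    simpa [add_comm] using partCount_succ 1 k
  have h3 (k : ℤ) : partCount 3 k = partCount 2 k + partCount 3 (k - 3) := by
    simpa [add_comm] using partCount_succ 2 k
  have h3' (k : ℤ) : twoThreeCount k - twoThreeCount (k - 3) =
      partCount 2 k - partCount 2 (k - 1) := by
    rw [twoThreeCount, twoThreeCount, h3 k, h3 (k - 1), show k - 3 - 1 = k - 1 - 3 by ring]
    ring
  have h2' (k : ℤ) : partCount 2 k - partCount 2 (k - 1) -
      (partCount 2 (k - 2) - partCount 2 (k - 2 - 1)) = partCount 1 k - partCount 1 (k - 1) := by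
    rw [h2 k, h2 (k - 1), show k - 2 - 1 = k - 1 - 2 by ring]
    ring
  calc _ = (twoThreeCount m - twoThreeCount (m - 3)) -
        (twoThreeCount (m - 2) - twoThreeCount (m - 2 - 3)) := by
        rw [show m - 2 - 3 = m - 5 by ring]; ring
    _ = partCount 1 m - partCount 1 (m - 1) := by rw [h3', h3', h2']
    _ = _ := by rw [h1 m, add_sub_cancel_right, partCount_zero_left]

theorem dZ_eq_boxCount (a : ℕ) (i : ℤ) : (dZ a i : ℤ) = boxCount 4 a i := by
  rw [dZ, boxCount, gaussCoeff, Nat.add_sub_cancel, Gcoeff_const_eq_card]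
  split_ifs <;> rfl

-- The paper's `f(a, c)`.
noncomputable def centralDiff (a : ℕ) (c : ℤ) : ℤ :=
  (dZ a (2 * (a : ℤ) - c) : ℤ) - dZ a (2 * (a : ℤ) - c - 1)

theorem centralDiff_neg_sub_one (a : ℕ) (c : ℤ) : centralDiff a (-c - 1) = -centralDiff a c := by
  simp only [centralDiff, dZ_eq_boxCount]
  rw [← boxCount_compl 4 a (2 * a - c - 1), ← boxCount_compl 4 a (2 * a - c)]
  ring_nf

theorem centralDiff_succ (a : ℕ) {c : ℤ} (hc : 0 ≤ c) :
    centralDiff (a + 1) c = centralDiff a (c - 2) + twoThreeCount (a + 1 - c) := by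
  have top_row {i : ℤ} (hi : i ≤ 2 * (a + 1)) :
      boxCount 4 (a + 1) i = boxCount 4 a i + partCount 3 (i - (a + 1)) := by
    rw [← boxCount_of_le (n := 3) (a := a + 1) (by push_cast; omega)]
    exact_mod_cast boxCount_succ_succ 3 a i
  simp only [centralDiff, dZ_eq_boxCount, twoThreeCount]
  rw [top_row (by push_cast; omega), top_row (by push_cast; omega)]
  push_cast
  ring_nf

theorem centralDiff_zero_left (c : ℤ) :
    centralDiff 0 c = (if c = 0 then 1 else 0) - if c = -1 then 1 else 0 := by
  simp only [centralDiff, dZ_eq_boxCount, boxCount_zero_right, Nat.cast_zero, mul_zero, zero_sub,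
    sub_eq_zero, neg_eq_iff_eq_neg, neg_zero]

theorem centralDiff_zero_and_one (a : ℕ) :
    centralDiff a 0 = twoThreeCount a ∧ centralDiff a 1 = 0 := by
  induction a with
  | zero => simp [centralDiff_zero_left, twoThreeCount_zero]
  | succ a ih =>
    constructor
    · rw [centralDiff_succ a le_rfl, show (0 : ℤ) - 2 = -1 - 1 by norm_num, centralDiff_neg_sub_one,
        ih.2]
      simp
    · rw [centralDiff_succ a zero_le_one, show (1 : ℤ) - 2 = -0 - 1 by norm_num,
        centralDiff_neg_sub_one, ih.1]
      simp

theorem centralDiff_succ_eq_ite (a : ℕ) {c : ℤ} (hc : 0 ≤ c) :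
    centralDiff (a + 1) c =
      (if 2 ≤ c then centralDiff a (c - 2) else 0) +
        if c = 1 then 0 else twoThreeCount (a + 1 - c) := by
  obtain rfl | rfl | hc2 : c = 0 ∨ c = 1 ∨ 2 ≤ c := by omega
  · simp [(centralDiff_zero_and_one (a + 1)).1]
  · simp [(centralDiff_zero_and_one (a + 1)).2]
  · rw [centralDiff_succ a hc, if_pos hc2, if_neg (by omega)]

section Bivariate

open MvPowerSeries

variable {R : Type*}

section Semiring

variable [Semiring R]

-- `∑_{a, c ≥ 0} g a c q^a t^c` with `q = X 0`, `t = X 1`; values of `g` off `ℕ × ℕ` are ignored.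
def bivariateSeries (g : ℤ → ℤ → R) : MvPowerSeries (Fin 2) R := fun m => g (m 0) (m 1)

@[simp] theorem coeff_bivariateSeries (g : ℤ → ℤ → R) (m : Fin 2 →₀ ℕ) :
    coeff m (bivariateSeries g) = g (m 0) (m 1) :=
  rfl

def NatSupported (g : ℤ → ℤ → R) : Prop := ∀ a c, a < 0 ∨ c < 0 → g a c = 0

theorem bivariateSeries_mul_X_pow_mul_X_pow {g : ℤ → ℤ → R} (hg : NatSupported g) (u v : ℕ) :
    bivariateSeries g * (X 0 ^ u * X 1 ^ v) = bivariateSeries fun a c => g (a - u) (c - v) := by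
  ext m
  rw [X_pow_eq, X_pow_eq, monomial_mul_monomial, mul_one, coeff_mul_monomial, mul_one,
    coeff_bivariateSeries, coeff_bivariateSeries]
  split_ifs with h
  · have hu : u ≤ m 0 := by simpa using h 0
    have hv : v ≤ m 1 := by simpa using h 1
    simp [Nat.cast_sub hu, Nat.cast_sub hv]
  · have : m 0 < u ∨ m 1 < v := by
      simp only [Finsupp.le_def, Fin.forall_fin_two] at h
      simp at h
      omega
    exact (hg _ _ (by omega)).symm

theorem bivariateSeries_add (g h : ℤ → ℤ → R) :
    bivariateSeries g + bivariateSeries h = bivariateSeries (g + h) :=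
  rfl

theorem one_eq_bivariateSeries :
    (1 : MvPowerSeries (Fin 2) R) = bivariateSeries fun a c => if a = 0 ∧ c = 0 then 1 else 0 := by
  ext m
  simp [coeff_one, Finsupp.ext_iff, Fin.forall_fin_two]

theorem X_pow_mul_X_pow_eq_bivariateSeries (i j : ℕ) :
    (X 0 ^ i * X 1 ^ j : MvPowerSeries (Fin 2) R) =
      bivariateSeries fun a c => if a = i ∧ c = j then 1 else 0 := by
  rw [← one_mul (X 0 ^ i * X 1 ^ j), one_eq_bivariateSeries,
    bivariateSeries_mul_X_pow_mul_X_pow (fun a c h => if_neg (by omega))]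
  simp only [sub_eq_zero]

end Semiring

section Ring

variable [Ring R]

theorem NatSupported.sub_shift {g : ℤ → ℤ → R} (hg : NatSupported g) (u v : ℕ) :
    NatSupported fun a c => g a c - g (a - u) (c - v) := by
  intro a c h
  dsimp only
  rw [hg a c h, hg _ _ (by omega), sub_zero]

theorem bivariateSeries_sub (g h : ℤ → ℤ → R) :
    bivariateSeries g - bivariateSeries h = bivariateSeries (g - h) :=
  rfl

theorem bivariateSeries_mul_one_sub {g : ℤ → ℤ → R} (hg : NatSupported g) (u v : ℕ) :
    bivariateSeries g * (1 - X 0 ^ u * X 1 ^ v) =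
      bivariateSeries fun a c => g a c - g (a - u) (c - v) := by
  rw [mul_one_sub, bivariateSeries_mul_X_pow_mul_X_pow hg]
  rfl

theorem bivariateSeries_mul_one_sub_X_pow {g : ℤ → ℤ → R} (hg : NatSupported g) (u : ℕ) :
    bivariateSeries g * (1 - X 0 ^ u) = bivariateSeries fun a c => g a c - g (a - u) c := by
  simpa using bivariateSeries_mul_one_sub hg u 0

end Ring

end Bivariate

open MvPowerSeries

noncomputable def centralDiffSeries : MvPowerSeries (Fin 2) ℤ :=
  bivariateSeries fun a c => if 0 ≤ a ∧ 0 ≤ c then centralDiff a.toNat c else 0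

theorem centralDiffSeries_mul :
    centralDiffSeries * (1 - X 0 * X 1 ^ 2) =
      bivariateSeries fun a c => if 0 ≤ c ∧ c ≠ 1 then twoThreeCount (a - c) else 0 := by
  rw [centralDiffSeries, ← pow_one (X 0 : MvPowerSeries (Fin 2) ℤ), bivariateSeries_mul_one_sub
    (fun a c h => if_neg (by omega))]
  congr 1
  funext a c
  push_cast
  rcases lt_or_ge c 0 with hc | hc
  · simp [hc.not_ge, show ¬ 2 ≤ c by omega]
  rcases lt_or_ge a 0 with ha | ha
  · simp [ha.not_ge, show ¬ 1 ≤ a by omega, twoThreeCount_of_neg (show a - c < 0 by omega)]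
  obtain ⟨n, rfl⟩ := Int.eq_ofNat_of_zero_le ha
  cases n with
  | zero =>
    rcases hc.lt_or_eq with hc | rfl
    · simp [centralDiff_zero_left, hc.ne', hc.le, twoThreeCount_of_neg (show -c < 0 by omega)]
      omega
    · simp [centralDiff_zero_left, twoThreeCount_zero]
  | succ n =>
    rw [if_pos ⟨by omega, hc⟩, Int.toNat_natCast, centralDiff_succ_eq_ite n hc]
    push_cast
    simp only [add_sub_cancel_right, Int.toNat_natCast]
    split_ifs <;> omega

theorem bivariateSeries_twoThreeCount_mul :
    (bivariateSeries fun a c => if 0 ≤ c ∧ c ≠ 1 then twoThreeCount (a - c) else 0) *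
        ((1 - X 0 ^ 2) * (1 - X 0 ^ 3)) =
      bivariateSeries fun a c => if 0 ≤ c ∧ c ≠ 1 then if a = c then 1 else 0 else 0 := by
  have hsupp : NatSupported fun a c => if 0 ≤ c ∧ c ≠ 1 then twoThreeCount (a - c) else 0 :=
    fun a c h => by
      dsimp only
      split_ifs with hc
      · exact twoThreeCount_of_neg (by omega)
      · rfl
  rw [← mul_assoc, bivariateSeries_mul_one_sub_X_pow hsupp,
    bivariateSeries_mul_one_sub_X_pow (by simpa using hsupp.sub_shift 2 0)]
  congr 1
  funext a c
  push_cast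
  by_cases hc : 0 ≤ c ∧ c ≠ 1
  · have := twoThreeCount_recurrence (a - c)
    rw [show a - c - 2 = a - 2 - c by ring, show a - c - 3 = a - 3 - c by ring,
      show a - c - 5 = a - 3 - 2 - c by ring] at this
    simp only [sub_eq_zero] at this
    simp only [if_pos hc]
    linear_combination this
  · simp only [if_neg hc, sub_zero]

theorem bivariateSeries_diagonal_mul :
    (bivariateSeries fun a c => if 0 ≤ c ∧ c ≠ 1 then if a = c then 1 else 0 else 0) *
        (1 - X 0 * X 1) =
      (1 - X 0 * X 1 + X 0 ^ 2 * X 1 ^ 2 : MvPowerSeries (Fin 2) ℤ) := by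
  have hsupp : NatSupported fun a c => if 0 ≤ c ∧ c ≠ 1 then if a = c then (1 : ℤ) else 0 else 0 :=
    fun a c h => by dsimp only; split_ifs <;> omega
  rw [← pow_one (X 0 * X 1), mul_pow, bivariateSeries_mul_one_sub hsupp,
    X_pow_mul_X_pow_eq_bivariateSeries, X_pow_mul_X_pow_eq_bivariateSeries, one_eq_bivariateSeries,
    bivariateSeries_sub, bivariateSeries_add]
  congr 1
  funext a c
  simp only [Pi.add_apply, Pi.sub_apply]
  push_cast
  split_ifs <;> omega

/-- The double generating function identity
`Σ_{a,c} f(a,c) q^a t^c = 1/((1-q²)(1-q³)(1-qt²)) + q²t²/((1-q²)(1-q³)(1-qt²)(1-qt))`,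
stated after clearing denominators in `MvPowerSeries (Fin 2) ℤ` (with `q = X 0`,
`t = X 1`): `F · (1-q²)(1-q³)(1-qt²)(1-qt) = 1 - qt + q²t²`. -/
theorem double_generating_function_identity (F : MvPowerSeries (Fin 2) ℤ)
    (hF : ∀ m : Fin 2 →₀ ℕ, MvPowerSeries.coeff m F =
      (dZ (m 0) (2 * ((m 0 : ℕ) : ℤ) - (m 1)) : ℤ) -
        dZ (m 0) (2 * ((m 0 : ℕ) : ℤ) - (m 1) - 1)) :
    F * ((1 - (MvPowerSeries.X 0 : MvPowerSeries (Fin 2) ℤ) ^ 2) *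
          (1 - MvPowerSeries.X 0 ^ 3) *
          (1 - MvPowerSeries.X 0 * MvPowerSeries.X 1 ^ 2) *
          (1 - MvPowerSeries.X 0 * MvPowerSeries.X 1)) =
      1 - MvPowerSeries.X 0 * MvPowerSeries.X 1 +
        MvPowerSeries.X 0 ^ 2 * MvPowerSeries.X 1 ^ 2 := by
  have hF' : F = centralDiffSeries := by
    ext m
    simp [hF m, centralDiffSeries, centralDiff]
  calc _ = centralDiffSeries * (1 - X 0 * X 1 ^ 2) * ((1 - X 0 ^ 2) * (1 - X 0 ^ 3)) *
        (1 - X 0 * X 1) := by rw [hF']; ring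
    _ = _ := by
      rw [centralDiffSeries_mul, bivariateSeries_twoThreeCount_mul, bivariateSeries_diagonal_mul]
end

section
/- Fix t ≥ 2. For all sufficiently large n (with respect to t), the rank-generating function F_λ(q) = Σ_i c_i q^i of partitions with distinct parts contained inside λ = ⟨n, n-t, n-2t, n-3t⟩ is nonunimodal; specifically, c_{2n} > c_{2n-1} and c_{2n-1} < c_{2n-2}. -/
/-!
Write `G(k)` for the number of partitions of `k` into at most four distinct parts, all at most `n`.
For `k ≤ 2n` and `n ≥ 6t`, the shape `⟨n, n-t, n-2t, n-3t⟩` only constrains the second part, so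
`c_k = G(k) - H(k)`, where `H(k)` counts the partitions of `G(k)` whose second part exceeds `n - t`.

Removing the staircase `(3, 2, 1, 0)` turns partitions with at least three distinct parts into
partitions inside a `4 × (n - 3)` box, counted by a Gaussian binomial coefficient. Its symmetry,
together with peeling off the fourth column, gives `G(2n-2) = G(2n-1)` and
`G(2n) - G(2n-1) = p₃(n-3) - p₃(n-4) - 1 ≈ n/6`, where `p₃` counts partitions into at most three
parts. On the other side, adding a cell to the third part injects `H(2n-2)` into `H(2n-1)` and
misses `(n, n-1)`, which lies in `H(2n-1)` because `t ≥ 2`. Removing a cell from the third part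
injects `H(2n)` into `H(2n-1)` except for at most `t²` partitions, each determined by its two
largest parts.
-/

open Finset

namespace FourParts

abbrev Quad := ℕ × ℕ × ℕ × ℕ

-- `#(box4 m j)` is the coefficient of `q^j` in the Gaussian binomial `[m + 4, 4]_q`.
def box4 (m j : ℕ) : Finset Quad :=
  (Iic m ×ˢ Iic m ×ˢ Iic m ×ˢ Iic m).filter fun x =>
    x.2.2.2 ≤ x.2.2.1 ∧ x.2.2.1 ≤ x.2.1 ∧ x.2.1 ≤ x.1 ∧ x.1 + x.2.1 + x.2.2.1 + x.2.2.2 = j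

def box3 (m j : ℕ) : Finset Quad :=
  (box4 m j).filter fun x => x.2.2.2 = 0

@[simp] lemma mem_box4 {m j a b c d : ℕ} :
    (a, b, c, d) ∈ box4 m j ↔ d ≤ c ∧ c ≤ b ∧ b ≤ a ∧ a ≤ m ∧ a + b + c + d = j := by
  simp only [box4, mem_filter, mem_product, mem_Iic]
  omega

@[simp] lemma mem_box3 {m j a b c d : ℕ} :
    (a, b, c, d) ∈ box3 m j ↔ d = 0 ∧ c ≤ b ∧ b ≤ a ∧ a ≤ m ∧ a + b + c = j := by
  simp only [box3, mem_filter, mem_box4]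
  omega

lemma card_box4_symm {m i j : ℕ} (h : i + j = 4 * m) : #(box4 m i) = #(box4 m j) := by
  let flip : Quad → Quad := fun x => (m - x.2.2.2, m - x.2.2.1, m - x.2.1, m - x.1)
  refine card_nbij' flip flip ?_ ?_ ?_ ?_ <;>
  · rintro ⟨a, b, c, d⟩ hx
    simp only [mem_coe, mem_box4, flip, Prod.mk.injEq] at hx ⊢
    omega

lemma card_box3_symm {m i j : ℕ} (h : i + j = 3 * m) : #(box3 m i) = #(box3 m j) := by
  let flip : Quad → Quad := fun x => (m - x.2.2.1, m - x.2.1, m - x.1, 0)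
  refine card_nbij' flip flip ?_ ?_ ?_ ?_ <;>
  · rintro ⟨a, b, c, d⟩ hx
    simp only [mem_coe, mem_box3, flip, Prod.mk.injEq, true_and] at hx ⊢
    omega

lemma card_box3_of_le {m j : ℕ} (h : j ≤ m) : #(box3 m j) = #(box3 j j) := by
  congr 1
  ext ⟨a, b, c, d⟩
  simp only [mem_box3]
  omega

lemma card_box4_eq_card_box3_add {m j : ℕ} (hj : 4 ≤ j) :
    #(box4 (m + 1) j) = #(box3 (m + 1) j) + #(box4 m (j - 4)) := by
  rw [← card_filter_add_card_filter_not (s := box4 (m + 1) j) (fun x => x.2.2.2 = 0)]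
  congr 1
  refine card_nbij' (fun x => (x.1 - 1, x.2.1 - 1, x.2.2.1 - 1, x.2.2.2 - 1))
    (fun x => (x.1 + 1, x.2.1 + 1, x.2.2.1 + 1, x.2.2.2 + 1)) ?_ ?_ ?_ ?_ <;>
  · rintro ⟨a, b, c, d⟩ hx
    simp only [mem_coe, mem_filter, mem_box4, Prod.mk.injEq] at hx ⊢
    omega

lemma card_box4_succ_near_middle {m i : ℕ} (hm : 1 ≤ m) (hi : i ≤ 2) :
    #(box4 (m + 1) (2 * m + 2 + i)) =
      #(box3 (m + 1 - i) (m + 1 - i)) + #(box4 m (2 * m + 2 - i)) := by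
  rw [card_box4_eq_card_box3_add (by omega), card_box3_symm (j := m + 1 - i) (by omega),
    card_box3_of_le (by omega), card_box4_symm (j := 2 * m + 2 - i) (by omega)]

lemma card_box4_middle {m : ℕ} (hm : 1 ≤ m) :
    #(box4 m (2 * m)) + #(box3 (m - 1) (m - 1)) = #(box4 m (2 * m + 1)) + #(box3 m m) ∧
      #(box4 m (2 * m + 1)) = #(box4 m (2 * m + 2)) := by
  induction m, hm using Nat.le_induction with
  | base => decide
  | succ m hm ih =>
    have h0 : #(box4 (m + 1) (2 * (m + 1))) = #(box3 (m + 1) (m + 1)) + #(box4 m (2 * m + 2)) :=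
      card_box4_succ_near_middle (i := 0) hm (by norm_num)
    have h1 : #(box4 (m + 1) (2 * (m + 1) + 1)) = #(box3 m m) + #(box4 m (2 * m + 1)) :=
      card_box4_succ_near_middle (i := 1) hm one_le_two
    have h2 : #(box4 (m + 1) (2 * (m + 1) + 2)) = #(box3 (m - 1) (m - 1)) + #(box4 m (2 * m)) :=
      card_box4_succ_near_middle (i := 2) hm le_rfl
    rw [h0, h1, h2, Nat.add_sub_cancel]
    omega

lemma card_box3_succ (j : ℕ) :
    #(box3 (j + 1) (j + 1)) = #(box3 j j) + ((j + 1) / 2 + 1 - (j + 3) / 3) := by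
  rw [← card_filter_add_card_filter_not (s := box3 (j + 1) (j + 1)) (fun x => x.1 = x.2.1),
    add_comm (#(box3 j j))]
  congr 1
  · rw [← Nat.card_Icc]
    refine card_nbij' (fun x => x.2.1) (fun b => (b, b, j + 1 - 2 * b, 0)) ?_ ?_ ?_ ?_
    · rintro ⟨a, b, c, d⟩ hx
      simp only [mem_coe, mem_filter, mem_box3, mem_Icc] at hx ⊢
      omega
    · intro b hb
      simp only [mem_coe, mem_filter, mem_box3, mem_Icc, true_and, and_true] at hb ⊢
      omega
    · rintro ⟨a, b, c, d⟩ hx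
      simp only [mem_coe, mem_filter, mem_box3, Prod.mk.injEq, true_and] at hx ⊢
      omega
    · intro b _
      rfl
  · refine card_nbij' (fun x => (x.1 - 1, x.2.1, x.2.2.1, x.2.2.2))
      (fun x => (x.1 + 1, x.2.1, x.2.2.1, x.2.2.2)) ?_ ?_ ?_ ?_ <;>
    · rintro ⟨a, b, c, d⟩ hx
      simp only [mem_coe, mem_filter, mem_box3, Prod.mk.injEq, and_true] at hx ⊢
      omega

def distinctQuads (lam : Fin 4 → ℕ) (k : ℕ) : Finset Quad :=
  (Iic (lam 0) ×ˢ Iic (lam 1) ×ˢ Iic (lam 2) ×ˢ Iic (lam 3)).filter fun x =>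
    (x.2.1 = 0 ∨ x.2.1 < x.1) ∧ (x.2.2.1 = 0 ∨ x.2.2.1 < x.2.1) ∧
      (x.2.2.2 = 0 ∨ x.2.2.2 < x.2.2.1) ∧ x.1 + x.2.1 + x.2.2.1 + x.2.2.2 = k

@[simp] lemma mem_distinctQuads {lam : Fin 4 → ℕ} {k a b c d : ℕ} :
    (a, b, c, d) ∈ distinctQuads lam k ↔ (b = 0 ∨ b < a) ∧ (c = 0 ∨ c < b) ∧ (d = 0 ∨ d < c) ∧
      a ≤ lam 0 ∧ b ≤ lam 1 ∧ c ≤ lam 2 ∧ d ≤ lam 3 ∧ a + b + c + d = k := by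
  simp only [distinctQuads, mem_filter, mem_product, mem_Iic]
  tauto

def quadEquiv : (Fin 4 → ℕ) ≃ Quad where
  toFun μ := (μ 0, μ 1, μ 2, μ 3)
  invFun x := ![x.1, x.2.1, x.2.2.1, x.2.2.2]
  left_inv μ := by ext i; fin_cases i <;> rfl
  right_inv _ := rfl

lemma fcoeff_eq_card_distinctQuads (lam : Fin 4 → ℕ) (k : ℕ) :
    Fcoeff lam k = #(distinctQuads lam k) := by
  rw [Fcoeff, ← Nat.card_eq_finsetCard]
  refine Nat.card_congr (quadEquiv.subtypeEquiv fun μ => ?_)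
  change FitsD lam μ ∧ _ ↔ (μ 0, μ 1, μ 2, μ 3) ∈ _
  rw [mem_distinctQuads, FitsD, Fin.sum_univ_four]
  constructor
  · rintro ⟨⟨hμ, hle⟩, hsum⟩
    exact ⟨hμ 0 1 (by decide), hμ 1 2 (by decide), hμ 2 3 (by decide),
      hle 0, hle 1, hle 2, hle 3, hsum⟩
  · rintro ⟨h01, h12, h23, h0, h1, h2, h3, hsum⟩
    refine ⟨⟨fun i j hij => ?_, fun i => by fin_cases i <;> assumption⟩, hsum⟩
    fin_cases i <;> fin_cases j <;> simp at hij ⊢ <;> omega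

lemma card_distinctQuads_const {n k : ℕ} (hn : 3 ≤ n) (hk : n < k) (hk6 : 6 ≤ k) :
    #(distinctQuads (fun _ => n) k) = ((k - 1) / 2 + 1 - (k - n)) + #(box4 (n - 3) (k - 6)) := by
  rw [← card_filter_add_card_filter_not (s := distinctQuads (fun _ => n) k) (fun x => x.2.2.1 = 0),
    ← Nat.card_Icc]
  congr 1
  · refine card_nbij' (fun x => x.2.1) (fun b => (k - b, b, 0, 0)) ?_ ?_ ?_ ?_
    · rintro ⟨a, b, c, d⟩ hx
      simp only [mem_coe, mem_filter, mem_distinctQuads, mem_Icc] at hx ⊢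
      omega
    · intro b hb
      simp only [mem_coe, mem_filter, mem_distinctQuads, mem_Icc, true_or, true_and,
        and_true] at hb ⊢
      omega
    · rintro ⟨a, b, c, d⟩ hx
      simp only [mem_coe, mem_filter, mem_distinctQuads, Prod.mk.injEq, true_and] at hx ⊢
      omega
    · intro b _
      rfl
  · refine card_nbij' (fun x => (x.1 - 3, x.2.1 - 2, x.2.2.1 - 1, x.2.2.2))
      (fun x => (x.1 + 3, x.2.1 + 2, x.2.2.1 + 1, x.2.2.2)) ?_ ?_ ?_ ?_ <;>
    · rintro ⟨a, b, c, d⟩ hx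
      simp only [mem_coe, mem_filter, mem_distinctQuads, mem_box4, Prod.mk.injEq,
        and_true] at hx ⊢
      omega

lemma card_distinctQuads_const_two_mul_sub_two {n : ℕ} (hn : 4 ≤ n) :
    #(distinctQuads (fun _ => n) (2 * n - 2)) = #(distinctQuads (fun _ => n) (2 * n - 1)) := by
  rw [card_distinctQuads_const (by omega) (by omega) (by omega),
    card_distinctQuads_const (by omega) (by omega) (by omega),
    card_box4_symm (i := 2 * n - 2 - 6) (j := 2 * (n - 3) + 2) (by omega),
    card_box4_symm (i := 2 * n - 1 - 6) (j := 2 * (n - 3) + 1) (by omega),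
    (card_box4_middle (m := n - 3) (by omega)).2]
  omega

lemma card_distinctQuads_const_two_mul {n : ℕ} (hn : 4 ≤ n) :
    #(distinctQuads (fun _ => n) (2 * n)) + 1 =
      #(distinctQuads (fun _ => n) (2 * n - 1)) + ((n - 3) / 2 + 1 - (n - 1) / 3) := by
  have hmid := (card_box4_middle (m := n - 3) (by omega)).1
  have hsucc := card_box3_succ (n - 4)
  rw [show n - 3 - 1 = n - 4 by omega] at hmid
  rw [show n - 4 + 1 = n - 3 by omega, show n - 4 + 3 = n - 1 by omega] at hsucc
  rw [card_distinctQuads_const (by omega) (by omega) (by omega),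
    card_distinctQuads_const (by omega) (by omega) (by omega),
    show 2 * n - 6 = 2 * (n - 3) by omega,
    card_box4_symm (i := 2 * n - 1 - 6) (j := 2 * (n - 3) + 1) (by omega)]
  omega

def highQuads (n t k : ℕ) : Finset Quad :=
  (distinctQuads (fun _ => n) k).filter fun x => n - t < x.2.1

lemma card_distinctQuads_add_card_highQuads {n t k : ℕ} (ht : 6 * t ≤ n) (hk : k ≤ 2 * n) :
    #(distinctQuads ![n, n - t, n - 2 * t, n - 3 * t] k) + #(highQuads n t k) =
      #(distinctQuads (fun _ => n) k) := by
  rw [highQuads, add_comm, ← card_filter_add_card_filter_not (s := distinctQuads (fun _ => n) k)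
    (fun x => n - t < x.2.1)]
  congr 2
  ext ⟨a, b, c, d⟩
  simp only [mem_filter, mem_distinctQuads, Matrix.cons_val_zero, Matrix.cons_val_one,
    Matrix.cons_val, not_lt]
  omega

lemma card_highQuads_two_mul_le (n t : ℕ) :
    #(highQuads n t (2 * n)) ≤ #(highQuads n t (2 * n - 1)) + t * t := by
  rw [← card_filter_add_card_filter_not (s := highQuads n t (2 * n))
    (fun x => x.2.2.2 + 2 ≤ x.2.2.1)]
  gcongr ?_ + ?_
  · refine card_le_card_of_injOn (fun x => (x.1, x.2.1, x.2.2.1 - 1, x.2.2.2)) ?_ ?_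
    · rintro ⟨a, b, c, d⟩ hx
      simp only [highQuads, mem_coe, mem_filter, mem_distinctQuads] at hx ⊢
      omega
    · rintro ⟨a, b, c, d⟩ hx ⟨a', b', c', d'⟩ hx' h
      simp only [highQuads, mem_coe, mem_filter, mem_distinctQuads, Prod.mk.injEq] at hx hx' h ⊢
      omega
  · calc _ ≤ #(Ioc (n - t) n ×ˢ Ioc (n - t) n) := by
          refine card_le_card_of_injOn (fun x => (x.1, x.2.1)) ?_ ?_
          · rintro ⟨a, b, c, d⟩ hx
            simp only [highQuads, mem_coe, mem_filter, mem_distinctQuads, mem_product,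
              mem_Ioc] at hx ⊢
            omega
          · rintro ⟨a, b, c, d⟩ hx ⟨a', b', c', d'⟩ hx' h
            simp only [highQuads, mem_coe, mem_filter, mem_distinctQuads,
              Prod.mk.injEq] at hx hx' h ⊢
            omega
      _ ≤ t * t := by
          rw [card_product, Nat.card_Ioc]
          gcongr <;> omega

lemma card_highQuads_two_mul_sub_two_lt {n t : ℕ} (ht : 2 ≤ t) (hn : 3 * t ≤ n) :
    #(highQuads n t (2 * n - 2)) < #(highQuads n t (2 * n - 1)) := by
  have hw : (n, n - 1, 0, 0) ∈ highQuads n t (2 * n - 1) := by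
    simp only [highQuads, mem_filter, mem_distinctQuads, true_or, true_and]
    omega
  calc #(highQuads n t (2 * n - 2))
      ≤ #((highQuads n t (2 * n - 1)).erase (n, n - 1, 0, 0)) := by
        refine card_le_card_of_injOn (fun x => (x.1, x.2.1, x.2.2.1 + 1, x.2.2.2)) ?_ ?_
        · rintro ⟨a, b, c, d⟩ hx
          simp only [highQuads, mem_coe, mem_erase, mem_filter, mem_distinctQuads, ne_eq,
            Prod.mk.injEq] at hx ⊢
          omega
        · rintro ⟨a, b, c, d⟩ - ⟨a', b', c', d'⟩ - h
          simp only [Prod.mk.injEq] at h ⊢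
          omega
    _ < #(highQuads n t (2 * n - 1)) := card_erase_lt_of_mem hw

end FourParts

open FourParts

/-- For fixed `t ≥ 2` and all `n` large enough, `F_λ` for
`λ = ⟨n, n-t, n-2t, n-3t⟩` is nonunimodal: `c_{2n} > c_{2n-1} < c_{2n-2}`. -/
theorem arithmetic_progression_nonunimodal (t : ℕ) (ht : 2 ≤ t) :
    ∃ N : ℕ, ∀ n ≥ N,
      Fcoeff ![n, n - t, n - 2 * t, n - 3 * t] (2 * n - 1) <
        Fcoeff ![n, n - t, n - 2 * t, n - 3 * t] (2 * n) ∧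
      Fcoeff ![n, n - t, n - 2 * t, n - 3 * t] (2 * n - 1) <
        Fcoeff ![n, n - t, n - 2 * t, n - 3 * t] (2 * n - 2) := by
  refine ⟨6 * (t * t) + 20, fun n hn => ?_⟩
  have htt : t ≤ t * t := Nat.le_mul_self t
  simp only [fcoeff_eq_card_distinctQuads]
  have h6t : 6 * t ≤ n := by omega
  have hF0 := card_distinctQuads_add_card_highQuads (k := 2 * n) h6t le_rfl
  have hF1 := card_distinctQuads_add_card_highQuads (k := 2 * n - 1) h6t (by omega)
  have hF2 := card_distinctQuads_add_card_highQuads (k := 2 * n - 2) h6t (by omega)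
  -- `(n - 3) / 2 + 1 - (n - 1) / 3 ≥ (n - 4) / 6 > t * t + 1` once `n ≥ N`
  have hG0 := card_distinctQuads_const_two_mul (n := n) (by omega)
  have hG2 := card_distinctQuads_const_two_mul_sub_two (n := n) (by omega)
  have hH0 := card_highQuads_two_mul_le n t
  have hH2 := card_highQuads_two_mul_sub_two_lt ht (by omega : 3 * t ≤ n)
  constructor <;> omega
end

section
/- The exactly one partition of 2n with distinct parts contained inside ⟨n, n-1, n-2, n-3⟩ but not inside ⟨n, n-2, n-4, n-6⟩ is ⟨n, n-1, 1⟩, and the exactly one such partition of 2n-1 is ⟨n, n-1⟩; moreover there is no such partition of 2n-2, for all sufficiently large n. -/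

private lemma dpc_fwd (n : ℕ) (μ : Fin 4 → ℕ)
    (hd : DistinctParts μ) (hle : ∀ i, μ i ≤ ![n, n - 1, n - 2, n - 3] i)
    (hnot : ¬ (∀ i, μ i ≤ ![n, n - 2, n - 4, n - 6] i)) :
    μ 0 ≤ n ∧ μ 1 ≤ n - 1 ∧ μ 2 ≤ n - 2 ∧ μ 3 ≤ n - 3 ∧
    (μ 1 = 0 ∨ μ 1 < μ 0) ∧ (μ 2 = 0 ∨ μ 2 < μ 1) ∧ (μ 3 = 0 ∨ μ 3 < μ 2) ∧
    (n - 2 < μ 1 ∨ n - 4 < μ 2 ∨ n - 6 < μ 3) := by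
  push_neg at hnot
  obtain ⟨i, hi⟩ := hnot
  have h0 := hle 0; have h1 := hle 1; have h2 := hle 2; have h3 := hle 3
  simp only [Matrix.cons_val_zero, Matrix.cons_val_one, Matrix.head_cons,
    Matrix.cons_val_two, Matrix.tail_cons, Matrix.cons_val_three] at h0 h1 h2 h3
  refine ⟨h0, h1, h2, h3, hd 0 1 (by decide), hd 1 2 (by decide), hd 2 3 (by decide), ?_⟩
  fin_cases i <;> simp at hi <;> omega

private lemma dpc_bwd (n : ℕ) (hn : 8 ≤ n) (a b c d : ℕ)
    (ha : a = n) (hb : b = n - 1) (hc : c ≤ 1) (hd0 : d = 0) (hcd : c = 1 → n ≥ 2) :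
    DistinctParts ![a, b, c, d] ∧ (∀ i, ![a, b, c, d] i ≤ ![n, n - 1, n - 2, n - 3] i) ∧
      ¬ (∀ i, ![a, b, c, d] i ≤ ![n, n - 2, n - 4, n - 6] i) := by
  refine ⟨?_, ?_, ?_⟩
  · intro i j hij
    fin_cases i <;> fin_cases j <;> simp_all <;> omega
  · intro i; fin_cases i <;> simp <;> omega
  · intro h
    have := h 1
    simp [hb] at this
    omega

/-- For all sufficiently large `n`: the unique partition of `2n` with distinct parts
inside `⟨n,n-1,n-2,n-3⟩` but not inside `⟨n,n-2,n-4,n-6⟩` is `⟨n,n-1,1⟩`; the unique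
such partition of `2n-1` is `⟨n,n-1⟩`; and there is no such partition of `2n-2`. -/
theorem difference_partitions_characterization :
    ∃ N : ℕ, ∀ n ≥ N,
      ({μ : Fin 4 → ℕ | DistinctParts μ ∧ (∀ i, μ i ≤ ![n, n - 1, n - 2, n - 3] i) ∧
          ¬ (∀ i, μ i ≤ ![n, n - 2, n - 4, n - 6] i) ∧ ∑ i, μ i = 2 * n} =
        {![n, n - 1, 1, 0]}) ∧
      ({μ : Fin 4 → ℕ | DistinctParts μ ∧ (∀ i, μ i ≤ ![n, n - 1, n - 2, n - 3] i) ∧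
          ¬ (∀ i, μ i ≤ ![n, n - 2, n - 4, n - 6] i) ∧ ∑ i, μ i = 2 * n - 1} =
        {![n, n - 1, 0, 0]}) ∧
      ({μ : Fin 4 → ℕ | DistinctParts μ ∧ (∀ i, μ i ≤ ![n, n - 1, n - 2, n - 3] i) ∧
          ¬ (∀ i, μ i ≤ ![n, n - 2, n - 4, n - 6] i) ∧ ∑ i, μ i = 2 * n - 2} =
        ∅) := by
  use 8
  intro n hn
  refine ⟨?_, ?_, ?_⟩
  · ext μ
    simp only [Set.mem_setOf_eq, Set.mem_singleton_iff]
    constructor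
    · rintro ⟨hd, hle, hnot, hsum⟩
      obtain ⟨h0, h1, h2, h3, d01, d12, d23, hv⟩ := dpc_fwd n μ hd hle hnot
      rw [Fin.sum_univ_four] at hsum
      have e0 : μ 0 = n := by omega
      have e1 : μ 1 = n - 1 := by omega
      have e2 : μ 2 = 1 := by omega
      have e3 : μ 3 = 0 := by omega
      funext j
      fin_cases j <;> simp_all
    · rintro rfl
      obtain ⟨hd, hle, hnot⟩ := dpc_bwd n hn n (n-1) 1 0 rfl rfl le_rfl rfl (fun _ => by omega)
      exact ⟨hd, hle, hnot, by rw [Fin.sum_univ_four]; simp; omega⟩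
  · ext μ
    simp only [Set.mem_setOf_eq, Set.mem_singleton_iff]
    constructor
    · rintro ⟨hd, hle, hnot, hsum⟩
      obtain ⟨h0, h1, h2, h3, d01, d12, d23, hv⟩ := dpc_fwd n μ hd hle hnot
      rw [Fin.sum_univ_four] at hsum
      have e0 : μ 0 = n := by omega
      have e1 : μ 1 = n - 1 := by omega
      have e2 : μ 2 = 0 := by omega
      have e3 : μ 3 = 0 := by omega
      funext j
      fin_cases j <;> simp_all
    · rintro rfl
      obtain ⟨hd, hle, hnot⟩ := dpc_bwd n hn n (n-1) 0 0 rfl rfl (by omega) rfl (fun h => by omega)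
      exact ⟨hd, hle, hnot, by rw [Fin.sum_univ_four]; simp; omega⟩
  · ext μ
    simp only [Set.mem_setOf_eq, Set.mem_empty_iff_false, iff_false]
    rintro ⟨hd, hle, hnot, hsum⟩
    obtain ⟨h0, h1, h2, h3, d01, d12, d23, hv⟩ := dpc_fwd n μ hd hle hnot
    rw [Fin.sum_univ_four] at hsum
    omega
end

section
/- Let p ≥ r ≥ s ≥ 1 with p ≥ 2r + s + 1, and let G_{(p,r,s)}(q) = Σ_{i=0}^{p+r+s} a_i q^i be the rank-generating function of arbitrary partitions contained inside the shape (p, r, s). Then a_{p-1} = a_p and a_i ≥ a_{i+1} for all i ≥ p - 1. -/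
def Tset (p r s k : ℕ) : Finset (ℕ × ℕ) :=
  ((Finset.range (r+1)) ×ˢ (Finset.range (s+1))).filter
    (fun q => q.2 ≤ q.1 ∧ k ≤ p + q.1 + q.2)

lemma Gcoeff_eq (p r s k : ℕ) (hsr : s ≤ r) (hk : 2 * r + s ≤ k) :
    Gcoeff ![p, r, s] k = (Tset p r s k).card := by
  have e : {μ : Fin 3 → ℕ // Antitone μ ∧ (∀ i, μ i ≤ ![p,r,s] i) ∧ ∑ i, μ i = k} ≃
      {q : ℕ × ℕ // q ∈ Tset p r s k} := by
    refine ⟨fun μ => ⟨(μ.1 1, μ.1 2), ?_⟩, fun q => ⟨![k - q.1.1 - q.1.2, q.1.1, q.1.2], ?_⟩,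
      ?_, ?_⟩
    · obtain ⟨μ, hA, hle, hsum⟩ := μ
      have h0 := hle 0; have h1 := hle 1; have h2 := hle 2
      simp only [Matrix.cons_val_zero, Matrix.cons_val_one, Matrix.head_cons,
        Matrix.cons_val_two, Matrix.tail_cons] at h0 h1 h2
      have h01 : μ 1 ≤ μ 0 := hA (by decide : (0:Fin 3) ≤ 1)
      have h12 : μ 2 ≤ μ 1 := hA (by decide : (1:Fin 3) ≤ 2)
      rw [Fin.sum_univ_three] at hsum
      simp only [Tset, Finset.mem_filter, Finset.mem_product, Finset.mem_range]
      omega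
    · obtain ⟨⟨x, y⟩, hq⟩ := q
      simp only [Tset, Finset.mem_filter, Finset.mem_product, Finset.mem_range] at hq
      refine ⟨?_, ?_, ?_⟩
      · intro i j hij
        fin_cases i <;> fin_cases j <;>
          simp_all [Fin.le_def, Matrix.cons_val_zero, Matrix.cons_val_one, Matrix.head_cons] <;>
          omega
      · intro i
        fin_cases i <;> simp <;> omega
      · rw [Fin.sum_univ_three]; simp; omega
    · rintro ⟨μ, hA, hle, hsum⟩
      have h01 : μ 1 ≤ μ 0 := hA (by decide : (0:Fin 3) ≤ 1)
      have h12 : μ 2 ≤ μ 1 := hA (by decide : (1:Fin 3) ≤ 2)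
      rw [Fin.sum_univ_three] at hsum
      apply Subtype.ext
      funext i
      fin_cases i <;> simp <;> omega
    · rintro ⟨⟨x, y⟩, hq⟩
      apply Subtype.ext
      simp
  rw [Gcoeff, Nat.card_congr e, Nat.card_eq_fintype_card, Fintype.card_coe]

/-- If `p ≥ r ≥ s ≥ 1` and `p ≥ 2r + s + 1`, then `a_{p-1} = a_p` and the
coefficients are nonincreasing from degree `p-1` on. -/
theorem shape_three_flat_then_decreasing (p r s : ℕ) (hrp : r ≤ p) (hsr : s ≤ r)
    (hs : 1 ≤ s) (hp : 2 * r + s + 1 ≤ p) :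
    Gcoeff ![p, r, s] (p - 1) = Gcoeff ![p, r, s] p ∧
    ∀ i, p - 1 ≤ i → Gcoeff ![p, r, s] (i + 1) ≤ Gcoeff ![p, r, s] i := by
  constructor
  · rw [Gcoeff_eq p r s (p-1) hsr (by omega), Gcoeff_eq p r s p hsr (by omega)]
    unfold Tset
    congr 1
    apply Finset.filter_congr
    intro q hq
    simp only [Finset.mem_product, Finset.mem_range] at hq
    constructor <;> rintro ⟨h1, h2⟩ <;> exact ⟨h1, by omega⟩
  · intro i hi
    rw [Gcoeff_eq p r s (i+1) hsr (by omega), Gcoeff_eq p r s i hsr (by omega)]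
    apply Finset.card_le_card
    intro q hq
    simp only [Tset, Finset.mem_filter] at *
    exact ⟨hq.1, hq.2.1, by omega⟩
end
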